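/- arXiv:2203.13242 — 7 statements merged into one kernel-verified Lean document; each statement's English description precedes it below -/
import Mathlib

section
/- Let f, g : ℝ → ℝ be continuous functions such that max(f(x), g(x)) → −∞ as x → +∞ and as x → −∞, and such that f ≤_inc g. Then f and g each attain their supremum over ℝ and their sets of maximizers are nonempty and compact; moreover, writing x_f^L and x_f^R for the least and greatest maximizers of f, and x_g^L and x_g^R for those of g, one has x_f^L ≤ x_g^L and x_f^R ≤ x_g^R. -/
open Filter

lemma aux_max (f : ℝ → ℝ) (hf : Continuous f) (ht : Tendsto f atTop atBot)
    (hb : Tendsto f atBot atBot) :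
    (∃ x : ℝ, ∀ y : ℝ, f y ≤ f x) ∧ IsCompact {x : ℝ | ∀ y : ℝ, f y ≤ f x} := by
  have hcoc : Tendsto f (cocompact ℝ) atBot := by
    rw [cocompact_eq_atBot_atTop]
    exact tendsto_sup.mpr ⟨hb, ht⟩
  obtain ⟨x0, hx0⟩ := hf.exists_forall_ge hcoc
  refine ⟨⟨x0, hx0⟩, ?_⟩
  have hclosed : IsClosed {x : ℝ | ∀ y : ℝ, f y ≤ f x} := by
    have : {x : ℝ | ∀ y : ℝ, f y ≤ f x} = ⋂ y : ℝ, {x : ℝ | f y ≤ f x} := by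
      ext x; simp
    rw [this]
    exact isClosed_iInter fun y => isClosed_le continuous_const hf
  obtain ⟨B, hB⟩ := (Filter.eventually_atTop).mp (ht.eventually (eventually_le_atBot (f x0 - 1)))
  obtain ⟨A, hA⟩ := (Filter.eventually_atBot).mp (hb.eventually (eventually_le_atBot (f x0 - 1)))
  refine IsCompact.of_isClosed_subset (isCompact_Icc (a := A) (b := B)) hclosed ?_
  intro x hx
  have hxe : f x = f x0 := le_antisymm (hx0 x) (hx x0)
  constructor
  · by_contra h
    have := hA x (le_of_not_ge (by linarith))
    linarith
  · by_contra h
    have := hB x (le_of_not_ge (by linarith))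
    linarith

/-- For `f, g : ℝ → ℝ` continuous with `max (f x) (g x) → -∞` as `x → ±∞` and
`f ≤_inc g` (increments of `f` dominated by those of `g`), both functions attain
their suprema, their maximizer sets are nonempty and compact, and the least and
greatest maximizers of `f` are below those of `g`. -/
theorem stmt0 (f g : ℝ → ℝ) (hf : Continuous f) (hg : Continuous g)
    (htop : Tendsto (fun x => max (f x) (g x)) atTop atBot)
    (hbot : Tendsto (fun x => max (f x) (g x)) atBot atBot)
    (hinc : ∀ x y : ℝ, x < y → f y - f x ≤ g y - g x) :
    (∃ xf : ℝ, ∀ y : ℝ, f y ≤ f xf) ∧ (∃ xg : ℝ, ∀ y : ℝ, g y ≤ g xg) ∧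
    {x : ℝ | ∀ y : ℝ, f y ≤ f x}.Nonempty ∧ IsCompact {x : ℝ | ∀ y : ℝ, f y ≤ f x} ∧
    {x : ℝ | ∀ y : ℝ, g y ≤ g x}.Nonempty ∧ IsCompact {x : ℝ | ∀ y : ℝ, g y ≤ g x} ∧
    ∃ xfL xfR xgL xgR : ℝ,
      IsLeast {x : ℝ | ∀ y : ℝ, f y ≤ f x} xfL ∧
      IsGreatest {x : ℝ | ∀ y : ℝ, f y ≤ f x} xfR ∧
      IsLeast {x : ℝ | ∀ y : ℝ, g y ≤ g x} xgL ∧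
      IsGreatest {x : ℝ | ∀ y : ℝ, g y ≤ g x} xgR ∧
      xfL ≤ xgL ∧ xfR ≤ xgR := by
  have hft : Tendsto f atTop atBot :=
    tendsto_atBot_mono (fun x => le_max_left (f x) (g x)) htop
  have hfb : Tendsto f atBot atBot :=
    tendsto_atBot_mono (fun x => le_max_left (f x) (g x)) hbot
  have hgt : Tendsto g atTop atBot :=
    tendsto_atBot_mono (fun x => le_max_right (f x) (g x)) htop
  have hgb : Tendsto g atBot atBot :=
    tendsto_atBot_mono (fun x => le_max_right (f x) (g x)) hbot
  obtain ⟨⟨xf, hxf⟩, hfc⟩ := aux_max f hf hft hfb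
  obtain ⟨⟨xg, hxg⟩, hgc⟩ := aux_max g hg hgt hgb
  have hfn : {x : ℝ | ∀ y : ℝ, f y ≤ f x}.Nonempty := ⟨xf, hxf⟩
  have hgn : {x : ℝ | ∀ y : ℝ, g y ≤ g x}.Nonempty := ⟨xg, hxg⟩
  obtain ⟨xfL, hxfL⟩ := hfc.exists_isLeast hfn
  obtain ⟨xfR, hxfR⟩ := hfc.exists_isGreatest hfn
  obtain ⟨xgL, hxgL⟩ := hgc.exists_isLeast hgn
  obtain ⟨xgR, hxgR⟩ := hgc.exists_isGreatest hgn
  refine ⟨⟨xf, hxf⟩, ⟨xg, hxg⟩, hfn, hfc, hgn, hgc,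
    xfL, xfR, xgL, xgR, hxfL, hxfR, hxgL, hxgR, ?_, ?_⟩
  · by_contra h
    have hlt : xgL < xfL := lt_of_not_ge h
    have h1 := hinc xgL xfL hlt
    have h2 : g xfL ≤ g xgL := hxgL.1 xfL
    have h3 : f xfL ≤ f xgL := by linarith
    have : xgL ∈ {x : ℝ | ∀ y : ℝ, f y ≤ f x} := fun y => (hxfL.1 y).trans h3
    exact absurd (hxfL.2 this) (not_le.mpr hlt)
  · by_contra h
    have hlt : xgR < xfR := lt_of_not_ge h
    have h1 := hinc xgR xfR hlt
    have h2 : f xgR ≤ f xfR := hxfR.1 xgR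
    have h3 : g xgR ≤ g xfR := by linarith
    have : xfR ∈ {x : ℝ | ∀ y : ℝ, g y ≤ g x} := fun y => (hxgR.1 y).trans h3
    exact absurd (hxgR.2 this) (not_le.mpr hlt)
end

section
/- Let L : ℝ⁴↑ → ℝ satisfy the global parabolic bound with some constant C > 0, let s ∈ ℝ, and let h : ℝ → ℝ be continuous with |h(x)| ≤ a + b|x| for all x ∈ ℝ, for some constants a, b > 0. Then for every t > s and y ∈ ℝ the quantity h_t(y; h) := sup_{x∈ℝ} {h(x) + L(x,s;y,t)} is finite, and the map (t,y) ↦ h_t(y; h) is continuous on (s,∞) × ℝ. -/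
/-- `L : ℝ⁴↑ → ℝ` satisfies the global parabolic bound with constant `C`:
for all `s < t`,
`|L(x,s;y,t) + (x−y)²/(t−s)| ≤ C (t−s)^{1/3} (log((2√(x²+y²+s²+t²)+4)/min(t−s,1)))²`. -/
def GlobalParabolicBound (C : ℝ) (L : ℝ → ℝ → ℝ → ℝ → ℝ) : Prop :=
  ∀ x s y t : ℝ, s < t →
    |L x s y t + (x - y) ^ 2 / (t - s)| ≤
      C * (t - s) ^ ((1 : ℝ) / 3) *
        (Real.log ((2 * Real.sqrt (x ^ 2 + y ^ 2 + s ^ 2 + t ^ 2) + 4) / min (t - s) 1)) ^ 2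

set_option maxHeartbeats 1000000 in
lemma auxK (C : ℝ) (hC : 0 < C) (L : ℝ → ℝ → ℝ → ℝ → ℝ) (hL : GlobalParabolicBound C L)
    (s t₀ y₀ : ℝ) (ht₀ : s < t₀) :
    ∃ K : ℝ, 0 < K ∧ ∀ t y x : ℝ, s + (t₀ - s)/2 ≤ t → t ≤ t₀ + 1 → |y - y₀| ≤ 1 →
      |L x s y t + (x - y)^2/(t - s)| ≤ K * (|x| + 1) := by
  set δ : ℝ := (t₀ - s)/2 with hδdef
  have hδ : 0 < δ := by simp only [hδdef]; linarith
  set m : ℝ := min δ 1 with hmdef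
  have hm : 0 < m := lt_min hδ one_pos
  set T : ℝ := t₀ + 1 - s with hTdef
  have hT : 0 < T := by simp only [hTdef]; linarith
  set R : ℝ := |y₀| + 1 + |s| + (|s| + |t₀| + 1) with hRdef
  have hR : 0 ≤ R := by positivity
  refine ⟨8*C*(T+1)*(R+2)/m, by positivity, fun t y x ht1 ht2 hy => ?_⟩
  have hst : s < t := by linarith
  have hts1 : δ ≤ t - s := by linarith
  have hts2 : t - s ≤ T := by linarith
  have h1 := hL x s y t hst
  set u : ℝ := (2 * Real.sqrt (x ^ 2 + y ^ 2 + s ^ 2 + t ^ 2) + 4) / min (t - s) 1 with hudef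
  have hsq : (0:ℝ) ≤ Real.sqrt (x ^ 2 + y ^ 2 + s ^ 2 + t ^ 2) := Real.sqrt_nonneg _
  have hmin : 0 < min (t - s) 1 := lt_min (by linarith) one_pos
  have hmin1 : min (t - s) 1 ≤ 1 := min_le_right _ _
  have hu1 : 1 ≤ u := by
    rw [hudef, le_div_iff₀ hmin]; linarith
  have hu0 : 0 < u := by linarith
  -- (log u)^2 ≤ 4 u
  have hlogsq : (Real.log u)^2 ≤ 4 * u := by
    have h0 : 0 ≤ Real.log u := Real.log_nonneg hu1
    have hsu : 0 < Real.sqrt u := Real.sqrt_pos.2 hu0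
    have h2 : Real.log (Real.sqrt u) ≤ Real.sqrt u - 1 := Real.log_le_sub_one_of_pos hsu
    have h3 : Real.log (Real.sqrt u) = Real.log u / 2 := Real.log_sqrt hu0.le
    have h4 : Real.sqrt u ^ 2 = u := Real.sq_sqrt hu0.le
    nlinarith [hsu.le]
  -- rpow bound
  have hrpow : (t - s) ^ ((1:ℝ)/3) ≤ T + 1 := by
    rcases le_or_gt (t - s) 1 with hc | hc
    · have := Real.rpow_le_one (by linarith : (0:ℝ) ≤ t - s) hc (by norm_num : (0:ℝ) ≤ 1/3)
      linarith
    · have h5 : (t - s) ^ ((1:ℝ)/3) ≤ (t - s) ^ (1:ℝ) :=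
        Real.rpow_le_rpow_of_exponent_le hc.le (by norm_num)
      rw [Real.rpow_one] at h5; linarith
  have hrpow0 : 0 ≤ (t - s) ^ ((1:ℝ)/3) := Real.rpow_nonneg (by linarith) _
  -- sqrt bound
  have hsqrt : Real.sqrt (x ^ 2 + y ^ 2 + s ^ 2 + t ^ 2) ≤ |x| + |y| + |s| + |t| := by
    have h6 : x ^ 2 + y ^ 2 + s ^ 2 + t ^ 2 ≤ (|x| + |y| + |s| + |t|)^2 := by
      have e : (|x| + |y| + |s| + |t|)^2 = |x|^2 + |y|^2 + |s|^2 + |t|^2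
          + 2*(|x| * |y| + |x| * |s| + |x| * |t| + |y| * |s| + |y| * |t| + |s| * |t|) := by ring
      rw [sq_abs, sq_abs, sq_abs, sq_abs] at e
      have n1 := mul_nonneg (abs_nonneg x) (abs_nonneg y)
      have n2 := mul_nonneg (abs_nonneg x) (abs_nonneg s)
      have n3 := mul_nonneg (abs_nonneg x) (abs_nonneg t)
      have n4 := mul_nonneg (abs_nonneg y) (abs_nonneg s)
      have n5 := mul_nonneg (abs_nonneg y) (abs_nonneg t)
      have n6 := mul_nonneg (abs_nonneg s) (abs_nonneg t)
      linarith
    calc Real.sqrt (x ^ 2 + y ^ 2 + s ^ 2 + t ^ 2) ≤ Real.sqrt ((|x| + |y| + |s| + |t|)^2) :=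
          Real.sqrt_le_sqrt h6
      _ = |x| + |y| + |s| + |t| := Real.sqrt_sq (by positivity)
  have hyb : |y| ≤ |y₀| + 1 := by
    have := abs_sub_abs_le_abs_sub y y₀
    linarith
  have htb : |t| ≤ |s| + |t₀| + 1 := by
    rw [abs_le]
    constructor
    · have := neg_abs_le s; have := abs_nonneg t₀; linarith
    · have := le_abs_self t₀; have := abs_nonneg s; linarith
  have hu2 : u ≤ (2*(|x| + R) + 4)/m := by
    rw [hudef]
    apply div_le_div₀ (by positivity) _ hm (min_le_min hts1 le_rfl)
    have : |y| + |s| + |t| ≤ R := by rw [hRdef]; have := abs_nonneg s; linarith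
    linarith
  calc |L x s y t + (x - y)^2/(t - s)|
      ≤ C * (t - s) ^ ((1:ℝ)/3) * (Real.log u)^2 := h1
    _ ≤ C * (T+1) * (Real.log u)^2 := by gcongr
    _ ≤ C * (T+1) * (4*u) := by
        apply mul_le_mul_of_nonneg_left hlogsq (by positivity)
    _ ≤ C * (T+1) * (4*((2*(|x| + R) + 4)/m)) := by gcongr
    _ = (4*C*(T+1)*(2*(|x| + R) + 4))/m := by ring
    _ ≤ (8*C*(T+1)*(R+2)*(|x|+1))/m := by
        have hpos : 0 ≤ 8*C*(T+1)*(|x| * (R+1)) := by positivity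
        exact (div_le_div_iff_of_pos_right hm).mpr (by nlinarith [hpos])
    _ = 8*C*(T+1)*(R+2)/m * (|x|+1) := by ring

set_option maxHeartbeats 1000000 in
/-- If `L` is continuous with the global parabolic bound and `h` is continuous with
at-most-linear growth, then `h_t(y;h) = sup_x {h(x) + L(x,s;y,t)}` is finite for all
`t > s`, `y ∈ ℝ`, and `(t,y) ↦ h_t(y;h)` is continuous on `(s,∞) × ℝ`. -/
theorem stmt6 (C : ℝ) (hC : 0 < C) (L : ℝ → ℝ → ℝ → ℝ → ℝ)
    (hLcont : ContinuousOn (fun p : ℝ × ℝ × ℝ × ℝ => L p.1 p.2.1 p.2.2.1 p.2.2.2)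
      {p : ℝ × ℝ × ℝ × ℝ | p.2.1 < p.2.2.2})
    (hL : GlobalParabolicBound C L)
    (s : ℝ) (a b : ℝ) (ha : 0 < a) (hb : 0 < b)
    (h : ℝ → ℝ) (hh : Continuous h) (hgrowth : ∀ x : ℝ, |h x| ≤ a + b * |x|) :
    (∀ t y : ℝ, s < t → BddAbove (Set.range (fun x => h x + L x s y t))) ∧
    ContinuousOn (fun p : ℝ × ℝ => sSup (Set.range (fun x => h x + L x s p.2 p.1)))
      {p : ℝ × ℝ | s < p.1} := by
  have hbdd : ∀ t y : ℝ, s < t → BddAbove (Set.range (fun x => h x + L x s y t)) := by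
    intro t y hst
    obtain ⟨K, hK, hKb⟩ := auxK C hC L hL s t y hst
    refine ⟨a + K + (b+K)*|y| + (b+K)^2*(t-s)/4, ?_⟩
    rintro z ⟨x, rfl⟩
    have hτ : (0:ℝ) < t - s := by linarith
    have hb1 := hKb t y x (by linarith) (by linarith) (by simp)
    have hLx : L x s y t ≤ K*(|x|+1) - (x-y)^2/(t-s) := by
      have := (abs_le.mp hb1).2; linarith
    have hhx : h x ≤ a + b*|x| := by linarith [le_abs_self (h x), hgrowth x]
    have key : (b+K) * |x - y| ≤ (x-y)^2/(t-s) + (b+K)^2*(t-s)/4 := by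
      have h5 : (b+K)*(t-s)*|x-y| ≤ (x-y)^2 + (b+K)^2*(t-s)^2/4 := by
        nlinarith [sq_nonneg (2*|x-y| - (b+K)*(t-s)), sq_abs (x-y)]
      have h6 : (b+K)*(t-s)*|x-y| / (t-s) ≤ ((x-y)^2 + (b+K)^2*(t-s)^2/4)/(t-s) :=
        (div_le_div_iff_of_pos_right hτ).mpr h5
      have e1 : (b+K)*(t-s)*|x-y| / (t-s) = (b+K)*|x-y| := by field_simp
      have e2 : ((x-y)^2 + (b+K)^2*(t-s)^2/4)/(t-s) = (x-y)^2/(t-s) + (b+K)^2*(t-s)/4 := by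
        field_simp
      rw [e1, e2] at h6; exact h6
    have habs : |x| ≤ |y| + |x - y| := by
      have := abs_sub_abs_le_abs_sub x y; linarith
    have habs' : (b+K)*|x| ≤ (b+K)*(|y| + |x-y|) :=
      mul_le_mul_of_nonneg_left habs (by positivity)
    linarith [hhx, hLx, key, habs']
  refine ⟨hbdd, ?_⟩
  rintro ⟨t₀, y₀⟩ hp₀
  simp only [Set.mem_setOf_eq] at hp₀
  obtain ⟨K, hK, hKb⟩ := auxK C hC L hL s t₀ y₀ hp₀
  obtain ⟨δ, hδdef⟩ : ∃ d : ℝ, d = (t₀ - s)/2 := ⟨_, rfl⟩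
  have hδ : 0 < δ := by rw [hδdef]; linarith
  obtain ⟨T, hTdef⟩ : ∃ d : ℝ, d = t₀ + 1 - s := ⟨_, rfl⟩
  have hT : 0 < T := by rw [hTdef]; linarith
  have hδT : δ ≤ T := by rw [hδdef, hTdef]; linarith
  obtain ⟨R', hRdef⟩ : ∃ d : ℝ, d = |y₀| + 1 := ⟨_, rfl⟩
  have hR : 0 < R' := by rw [hRdef]; positivity
  obtain ⟨E, hEdef⟩ : ∃ d : ℝ, d = a + K + R'^2/δ + (a + R'^2/δ + K) + 1 := ⟨_, rfl⟩
  have hE0 : 0 < E := by rw [hEdef]; positivity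
  obtain ⟨M, hMdef⟩ : ∃ d : ℝ, d = max 1 (2*T*((b+K)+E)) := ⟨_, rfl⟩
  have hM1 : (1:ℝ) ≤ M := by rw [hMdef]; exact le_max_left _ _
  have hM2 : 2*T*((b+K)+E) ≤ M := by rw [hMdef]; exact le_max_right _ _
  obtain ⟨tmin, htmindef⟩ : ∃ d : ℝ, d = s + δ := ⟨_, rfl⟩
  have htmin : s < tmin := by rw [htmindef]; linarith
  -- the key comparison outside [-M, M]
  have claim1 : ∀ t y : ℝ, tmin ≤ t → t ≤ t₀ + 1 → |y - y₀| ≤ 1 → ∀ x : ℝ, M < |x| →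
      h x + L x s y t < h 0 + L 0 s y t := by
    intro t y ht1 ht2 hy x hxM
    have hst : s < t := lt_of_lt_of_le htmin ht1
    have hτ0 : (0:ℝ) < t - s := by linarith
    have hτ1 : δ ≤ t - s := by rw [htmindef] at ht1; linarith
    have hτ2 : t - s ≤ T := by rw [hTdef]; linarith
    have hyR : |y| ≤ R' := by
      have := abs_sub_abs_le_abs_sub y y₀; rw [hRdef]; linarith
    have hy2 : y^2 ≤ R'^2 := by nlinarith [sq_abs y, abs_nonneg y]
    have hQ0 : y^2/(t-s) ≤ R'^2/δ :=
      div_le_div₀ (by positivity) hy2 hδ hτ1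
    -- lower bound on the right side
    have hb0 := hKb t y 0 (by rw [htmindef, hδdef] at ht1; linarith) ht2 hy
    have hb0' : -(R'^2/δ) - K ≤ L 0 s y t := by
      have h1 := (abs_le.mp hb0).1
      rw [show ((0:ℝ) - y)^2 = y^2 from by ring] at h1
      simp only [abs_zero] at h1
      linarith
    have hh0 : -a ≤ h 0 := by
      have h1 := hgrowth 0
      rw [abs_zero] at h1
      linarith [neg_abs_le (h 0)]
    -- upper bound on the left side
    have hbx := hKb t y x (by rw [htmindef, hδdef] at ht1; linarith) ht2 hy
    have hLx : L x s y t ≤ K*(|x|+1) - (x-y)^2/(t-s) := by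
      have := (abs_le.mp hbx).2; linarith
    have hhx : h x ≤ a + b*|x| := by linarith [le_abs_self (h x), hgrowth x]
    have hxy2 : x^2/2 - R'^2 ≤ (x-y)^2 := by nlinarith [sq_nonneg (x - 2*y), hy2]
    have hQxa : (x-y)^2/T ≤ (x-y)^2/(t-s) :=
      div_le_div_of_nonneg_left (sq_nonneg _) hτ0 hτ2
    have hQxb : (x^2/2 - R'^2)/T ≤ (x-y)^2/T := (div_le_div_iff_of_pos_right hT).mpr hxy2
    have hRT : R'^2/T ≤ R'^2/δ := div_le_div_of_nonneg_left (by positivity) hδ hδT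
    have hx1 : (1:ℝ) ≤ |x| := le_trans hM1 hxM.le
    have hx2 : M*|x| ≤ x^2 := by nlinarith [sq_abs x, hxM, hM1]
    have hbig : ((b+K)+E)*|x| ≤ (x^2/2)/T := by
      rw [le_div_iff₀ hT]
      have h8 := mul_le_mul_of_nonneg_right hM2 (abs_nonneg x)
      nlinarith [hx2, h8]
    have hEx : E ≤ E * |x| := by nlinarith [hE0, hx1]
    have hElin : E = a + K + R'^2/δ + (a + R'^2/δ + K) + 1 := hEdef
    have expand : (x^2/2 - R'^2)/T = (x^2/2)/T - R'^2/T := by ring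
    linarith [hhx, hLx, hQxa, hQxb, hRT, hbig, hEx, hh0, hb0', hElin, expand]
  -- the truncated sup function, globally continuous
  have hfc : Continuous ↿(fun (p : ℝ × ℝ) (x : ℝ) => h x + L x s p.2 (max p.1 tmin)) := by
    show Continuous fun q : (ℝ × ℝ) × ℝ => h q.2 + L q.2 s q.1.2 (max q.1.1 tmin)
    apply (hh.comp continuous_snd).add
    have hmap : Continuous fun q : (ℝ × ℝ) × ℝ =>
        ((q.2, s, q.1.2, max q.1.1 tmin) : ℝ × ℝ × ℝ × ℝ) := by
      fun_prop
    exact hLcont.comp_continuous hmap (fun q => by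
      simp only [Set.mem_setOf_eq]
      exact lt_of_lt_of_le htmin (le_max_right _ _))
  have hgcont : Continuous fun p : ℝ × ℝ =>
      sSup ((fun x => h x + L x s p.2 (max p.1 tmin)) '' Set.Icc (-M) M) :=
    IsCompact.continuous_sSup isCompact_Icc hfc
  have h0mem : (0:ℝ) ∈ Set.Icc (-M) M := ⟨by linarith, by linarith⟩
  -- agreement on the open neighborhood V
  have hVopen : IsOpen (Set.Ioo tmin (t₀+1) ×ˢ Metric.ball y₀ 1) :=
    isOpen_Ioo.prod Metric.isOpen_ball
  have hp₀V : ((t₀, y₀) : ℝ × ℝ) ∈ Set.Ioo tmin (t₀+1) ×ˢ Metric.ball y₀ 1 := by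
    refine ⟨⟨?_, by linarith⟩, Metric.mem_ball_self one_pos⟩
    rw [htmindef, hδdef]; linarith
  have hagree : ∀ p ∈ Set.Ioo tmin (t₀+1) ×ˢ Metric.ball y₀ 1,
      sSup (Set.range (fun x => h x + L x s p.2 p.1)) =
      sSup ((fun x => h x + L x s p.2 (max p.1 tmin)) '' Set.Icc (-M) M) := by
    rintro ⟨t, y⟩ ⟨⟨ht1, ht2⟩, hy⟩
    have hst : s < t := lt_trans htmin ht1
    have hy' : |y - y₀| ≤ 1 := by
      rw [Metric.mem_ball, Real.dist_eq] at hy; exact hy.le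
    have hmax : max t tmin = t := max_eq_left ht1.le
    simp only [hmax]
    have hbddim : BddAbove ((fun x => h x + L x s y t) '' Set.Icc (-M) M) :=
      (hbdd t y hst).mono (Set.image_subset_range _ _)
    apply le_antisymm
    · apply csSup_le (Set.range_nonempty _)
      rintro z ⟨x, rfl⟩
      by_cases hxM : |x| ≤ M
      · exact le_csSup hbddim ⟨x, ⟨(abs_le.mp hxM).1, (abs_le.mp hxM).2⟩, rfl⟩
      · push_neg at hxM
        have hlt := claim1 t y ht1.le ht2.le hy' x hxM
        exact le_trans hlt.le (le_csSup hbddim ⟨0, h0mem, rfl⟩)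
    · exact csSup_le_csSup (hbdd t y hst) ⟨_, Set.mem_image_of_mem _ h0mem⟩
        (Set.image_subset_range _ _)
  -- conclude
  apply ContinuousAt.continuousWithinAt
  apply (hgcont.continuousAt).congr
  exact Filter.eventuallyEq_of_mem (hVopen.mem_nhds hp₀V)
    (fun p hp => (hagree p hp).symm)
end

section
/- Let L : ℝ⁴↑ → ℝ satisfy the global parabolic bound with some constant C > 0, let s ∈ ℝ, and let h : ℝ → ℝ be continuous with |h(x)| ≤ a + b|x| for all x ∈ ℝ, for some constants a, b > 0. Then for every t > s and every δ > 0 there exists Y₀ > 0 such that for all y ∈ ℝ with |y| ≥ Y₀, the set of maximizers of x ↦ h(x) + L(x,s;y,t) over x ∈ ℝ is nonempty and contained in the interval (y − |y|^{1/2+δ}, y + |y|^{1/2+δ}). -/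
open Real Filter

lemma sqrt_sq_add_sq_add_sq_add_sq_le (x y s t : ℝ) :
    √(x ^ 2 + y ^ 2 + s ^ 2 + t ^ 2) ≤ |x| + |y| + |s| + |t| := by
  rw [sqrt_le_left (by positivity)]
  nlinarith [sq_abs x, sq_abs y, sq_abs s, sq_abs t, mul_nonneg (abs_nonneg x) (abs_nonneg y),
    mul_nonneg (abs_nonneg x) (abs_nonneg s), mul_nonneg (abs_nonneg x) (abs_nonneg t),
    mul_nonneg (abs_nonneg y) (abs_nonneg s), mul_nonneg (abs_nonneg y) (abs_nonneg t),
    mul_nonneg (abs_nonneg s) (abs_nonneg t)]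

lemma log_sq_le_four_mul {A : ℝ} (hA : 1 ≤ A) : log A ^ 2 ≤ 4 * A := by
  have hlog : log A ≤ 2 * √A := by
    simpa [sqrt_eq_rpow, div_eq_mul_inv, mul_comm] using
      log_le_rpow_div (by linarith : (0 : ℝ) ≤ A) one_half_pos
  calc log A ^ 2 ≤ (2 * √A) ^ 2 := by gcongr; exact log_nonneg hA
    _ = 4 * A := by rw [mul_pow, sq_sqrt (by linarith)]; norm_num

lemma le_add_sqrt_of_sq_le_add_mul {A B d : ℝ} (hB : 0 ≤ B) (h : d ^ 2 ≤ A + B * d) :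
    d ≤ B + √A := by
  rcases le_or_gt d B with hdB | hdB
  · linarith [sqrt_nonneg A]
  · have : (d - B) ^ 2 ≤ A := by nlinarith
    linarith [le_sqrt_of_sq_le this]

lemma eventually_add_sqrt_lt_rpow (c₀ : ℝ) {c₁ c₂ δ : ℝ} (hc₁ : 0 ≤ c₁) (hc₂ : 0 ≤ c₂)
    (hδ : 0 < δ) : ∀ᶠ u in atTop, c₀ + √(c₁ + c₂ * u) < u ^ ((1 : ℝ) / 2 + δ) := by
  set c := √(c₁ + c₂)
  have hgap : Tendsto (fun u : ℝ => u ^ ((1 : ℝ) / 2 + δ) - c * √u) atTop atTop := by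
    have : Tendsto (fun u : ℝ => √u * (u ^ δ - c)) atTop atTop :=
      tendsto_sqrt_atTop.atTop_mul_atTop₀ <|
        tendsto_atTop_add_const_right _ _ (tendsto_rpow_atTop hδ)
    refine this.congr' ?_
    filter_upwards [eventually_gt_atTop 0] with u hu
    rw [rpow_add hu, sqrt_eq_rpow]; ring
  filter_upwards [eventually_ge_atTop 1, hgap.eventually_gt_atTop c₀] with u hu hgt
  have : √(c₁ + c₂ * u) ≤ c * √u := by
    rw [← sqrt_mul (by positivity)]
    exact sqrt_le_sqrt (by nlinarith)
  linarith

section Profile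

variable {g : ℝ → ℝ} {y τ α β : ℝ}

lemma tendsto_cocompact_atBot_of_le_sub_sq (hτ : 0 < τ)
    (hg : ∀ x, g x ≤ α + β * |x - y| - (x - y) ^ 2 / τ) : Tendsto g (cocompact ℝ) atBot := by
  have hdist : Tendsto (fun x => |x - y|) (cocompact ℝ) atTop :=
    tendsto_atTop_mono (fun x => by rw [norm_eq_abs]; linarith [abs_sub_abs_le_abs_sub x y])
      (tendsto_atTop_add_const_right _ (-|y|) tendsto_norm_cocompact_atTop)
  have hpoly : Tendsto (fun v : ℝ => α - v * (v / τ - β)) atTop atBot :=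
    tendsto_atBot_add_const_left _ α <| tendsto_neg_atTop_atBot.comp <|
      tendsto_id.atTop_mul_atTop₀ <|
        tendsto_atTop_add_const_right _ (-β) (tendsto_id.atTop_div_const hτ)
  refine tendsto_atBot_mono (fun x => ?_) (hpoly.comp hdist)
  have := hg x
  rw [← sq_abs] at this
  simp only [Function.comp_apply]
  linarith [show |x - y| * (|x - y| / τ - β) = |x - y| ^ 2 / τ - β * |x - y| by ring]

lemma exists_forall_le_of_le_sub_sq (hcont : Continuous g) (hτ : 0 < τ)
    (hg : ∀ x, g x ≤ α + β * |x - y| - (x - y) ^ 2 / τ) : ∃ x₀, ∀ w, g w ≤ g x₀ :=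
  hcont.exists_forall_ge (tendsto_cocompact_atBot_of_le_sub_sq hτ hg)

lemma abs_sub_le_of_le_sub_sq {γ x : ℝ} (hτ : 0 < τ) (hβ : 0 ≤ β)
    (hg : ∀ x, g x ≤ α + β * |x - y| - (x - y) ^ 2 / τ) (hgy : γ ≤ g y)
    (hmax : ∀ w, g w ≤ g x) : |x - y| ≤ τ * β + √(τ * (α - γ)) := by
  apply le_add_sqrt_of_sq_le_add_mul (by positivity)
  have h1 : (x - y) ^ 2 / τ ≤ α - γ + β * |x - y| := by linarith [hg x, hmax y]
  rw [div_le_iff₀ hτ] at h1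
  rw [sq_abs]; linarith

end Profile

lemma GlobalParabolicBound.exists_linear_bound {C : ℝ} {L : ℝ → ℝ → ℝ → ℝ → ℝ}
    (hL : GlobalParabolicBound C L) (hC : 0 ≤ C) {s t : ℝ} (hst : s < t) :
    ∃ P Q : ℝ, 0 ≤ P ∧ 0 ≤ Q ∧
      ∀ x y, |L x s y t + (x - y) ^ 2 / (t - s)| ≤ P + Q * (|x| + |y|) := by
  have hm : 0 < min (t - s) 1 := lt_min (sub_pos.2 hst) one_pos
  set K := 4 * C * (t - s) ^ ((1 : ℝ) / 3) / min (t - s) 1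
  have hK : 0 ≤ K := by positivity
  refine ⟨K * (2 * (|s| + |t|) + 4), 2 * K, by positivity, by positivity, fun x y => ?_⟩
  set R := √(x ^ 2 + y ^ 2 + s ^ 2 + t ^ 2)
  have hA : 1 ≤ (2 * R + 4) / min (t - s) 1 := by
    rw [le_div_iff₀ hm]
    linarith [min_le_right (t - s) 1, sqrt_nonneg (x ^ 2 + y ^ 2 + s ^ 2 + t ^ 2)]
  calc |L x s y t + (x - y) ^ 2 / (t - s)|
      ≤ C * (t - s) ^ ((1 : ℝ) / 3) * log ((2 * R + 4) / min (t - s) 1) ^ 2 := hL x s y t hst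
    _ ≤ C * (t - s) ^ ((1 : ℝ) / 3) * (4 * ((2 * R + 4) / min (t - s) 1)) := by
        have := rpow_nonneg (sub_pos.2 hst).le ((1 : ℝ) / 3)
        gcongr
        exact log_sq_le_four_mul hA
    _ = K * (2 * R + 4) := by simp only [K]; field_simp
    _ ≤ K * (2 * (|x| + |y| + |s| + |t|) + 4) := by
        gcongr; exact sqrt_sq_add_sq_add_sq_add_sq_le x y s t
    _ = K * (2 * (|s| + |t|) + 4) + 2 * K * (|x| + |y|) := by ring

section Objective

variable {h ℓ : ℝ → ℝ} {a b P Q τ y : ℝ}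

lemma add_le_of_abs_le_linear (hb : 0 ≤ b) (hQ : 0 ≤ Q) (hh : ∀ x, |h x| ≤ a + b * |x|)
    (hℓ : ∀ x, |ℓ x + (x - y) ^ 2 / τ| ≤ P + Q * (|x| + |y|)) (x : ℝ) :
    h x + ℓ x ≤ (a + P + (b + 2 * Q) * |y|) + (b + Q) * |x - y| - (x - y) ^ 2 / τ := by
  have hx : |x| ≤ |x - y| + |y| := by linarith [abs_sub_abs_le_abs_sub x y]
  have := mul_le_mul_of_nonneg_left hx (add_nonneg hb hQ)
  linarith [(abs_le.mp (hh x)).2, (abs_le.mp (hℓ x)).2]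

lemma neg_le_add_of_abs_le_linear (hh : ∀ x, |h x| ≤ a + b * |x|)
    (hℓ : ∀ x, |ℓ x + (x - y) ^ 2 / τ| ≤ P + Q * (|x| + |y|)) :
    -(a + P + (b + 2 * Q) * |y|) ≤ h y + ℓ y := by
  have := hℓ y
  rw [sub_self, sq, zero_mul, zero_div, add_zero] at this
  linarith [(abs_le.mp (hh y)).1, (abs_le.mp this).1]

end Objective

/-- Localization of maximizers: under the global parabolic bound and linear growth of
`h`, for every `t > s` and `δ > 0` there is `Y₀ > 0` such that for `|y| ≥ Y₀` the
maximizers of `x ↦ h(x) + L(x,s;y,t)` form a nonempty set contained in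
`(y − |y|^{1/2+δ}, y + |y|^{1/2+δ})`. -/
theorem stmt7 (C : ℝ) (hC : 0 < C) (L : ℝ → ℝ → ℝ → ℝ → ℝ)
    (hLcont : ContinuousOn (fun p : ℝ × ℝ × ℝ × ℝ => L p.1 p.2.1 p.2.2.1 p.2.2.2)
      {p : ℝ × ℝ × ℝ × ℝ | p.2.1 < p.2.2.2})
    (hL : GlobalParabolicBound C L)
    (s : ℝ) (a b : ℝ) (ha : 0 < a) (hb : 0 < b)
    (h : ℝ → ℝ) (hh : Continuous h) (hgrowth : ∀ x : ℝ, |h x| ≤ a + b * |x|) :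
    ∀ t : ℝ, s < t → ∀ δ : ℝ, 0 < δ → ∃ Y₀ : ℝ, 0 < Y₀ ∧
      ∀ y : ℝ, Y₀ ≤ |y| →
        {x : ℝ | ∀ w : ℝ, h w + L w s y t ≤ h x + L x s y t}.Nonempty ∧
        {x : ℝ | ∀ w : ℝ, h w + L w s y t ≤ h x + L x s y t} ⊆
          Set.Ioo (y - |y| ^ ((1 : ℝ) / 2 + δ)) (y + |y| ^ ((1 : ℝ) / 2 + δ)) := by
  intro t hst δ hδ
  have hτ : 0 < t - s := sub_pos.2 hst
  obtain ⟨P, Q, hP, hQ, hE⟩ := hL.exists_linear_bound hC.le hst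
  obtain ⟨Y, hY⟩ := eventually_atTop.mp <| eventually_add_sqrt_lt_rpow ((t - s) * (b + Q))
    (by positivity : 0 ≤ 2 * (t - s) * (a + P)) (by positivity : 0 ≤ 2 * (t - s) * (b + 2 * Q)) hδ
  refine ⟨max Y 1, by positivity, fun y hy => ?_⟩
  have hup := add_le_of_abs_le_linear hb.le hQ hgrowth (hE · y)
  have hlow := neg_le_add_of_abs_le_linear hgrowth (hE · y)
  have hcont : Continuous fun x => h x + L x s y t :=
    hh.add <| hLcont.comp_continuous (by fun_prop : Continuous fun x : ℝ => (x, s, y, t))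
      fun _ => hst
  refine ⟨exists_forall_le_of_le_sub_sq hcont hτ hup, fun x hx => ?_⟩
  have hdist := abs_sub_le_of_le_sub_sq hτ (by positivity) hup hlow hx
  have hlt := hY |y| (le_of_max_le_left hy)
  rw [show (t - s) * (a + P + (b + 2 * Q) * |y| - -(a + P + (b + 2 * Q) * |y|)) =
    2 * (t - s) * (a + P) + 2 * (t - s) * (b + 2 * Q) * |y| by ring] at hdist
  have hclose := abs_sub_lt_iff.mp (hdist.trans_lt hlt)
  exact ⟨by linarith, by linarith⟩
end

section
/- Let L : ℝ⁴↑ → ℝ satisfy the global parabolic bound with some constant C > 0, let s ∈ ℝ, and let h : ℝ → ℝ be continuous with |h(x)| ≤ a + b|x| for all x ∈ ℝ, for some constants a, b > 0. Then for every compact set K ⊂ (s,∞) there exist constants A, B > 0 (depending only on a, b, K, C, s) such that |h_t(y; h)| ≤ A + B|y| for all t ∈ K and all y ∈ ℝ, where h_t(y; h) := sup_{x∈ℝ} {h(x) + L(x,s;y,t)}. -/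
set_option maxHeartbeats 1000000


/-- Uniform linear bound on the evolved profile: under the global parabolic bound and
linear growth of `h`, for every compact `K ⊂ (s,∞)` there are constants `A, B > 0`
with `|h_t(y;h)| ≤ A + B|y|` for all `t ∈ K`, `y ∈ ℝ`, where
`h_t(y;h) = sup_x {h(x) + L(x,s;y,t)}`. -/
theorem stmt8 (C : ℝ) (hC : 0 < C) (L : ℝ → ℝ → ℝ → ℝ → ℝ)
    (hLcont : ContinuousOn (fun p : ℝ × ℝ × ℝ × ℝ => L p.1 p.2.1 p.2.2.1 p.2.2.2)
      {p : ℝ × ℝ × ℝ × ℝ | p.2.1 < p.2.2.2})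
    (hL : GlobalParabolicBound C L)
    (s : ℝ) (a b : ℝ) (ha : 0 < a) (hb : 0 < b)
    (h : ℝ → ℝ) (hh : Continuous h) (hgrowth : ∀ x : ℝ, |h x| ≤ a + b * |x|) :
    ∀ K : Set ℝ, IsCompact K → K ⊆ Set.Ioi s →
      ∃ A : ℝ, 0 < A ∧ ∃ B : ℝ, 0 < B ∧
        ∀ t ∈ K, ∀ y : ℝ,
          |sSup (Set.range (fun x => h x + L x s y t))| ≤ A + B * |y| := by
  intro K hK hKs
  rcases K.eq_empty_or_nonempty with hKe | hne
  · exact ⟨1, one_pos, 1, one_pos, by simp [hKe]⟩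
  obtain ⟨t₀, ht₀K, hmin⟩ := hK.exists_isMinOn hne continuousOn_id
  obtain ⟨t₁, ht₁K, hmax⟩ := hK.exists_isMaxOn hne continuousOn_id
  have hmin' : ∀ t ∈ K, t₀ ≤ t := fun t ht => hmin ht
  have hmax' : ∀ t ∈ K, t ≤ t₁ := fun t ht => hmax ht
  set δ := t₀ - s with hδdef
  have hδ : 0 < δ := sub_pos.2 (hKs ht₀K)
  set R := |t₀| + |t₁| with hRdef
  have hR0 : 0 ≤ R := add_nonneg (abs_nonneg _) (abs_nonneg _)
  have hR : ∀ t ∈ K, |t| ≤ R := by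
    intro t ht
    refine abs_le.2 ⟨?_, ?_⟩
    · have := hmin' t ht; have := neg_abs_le t₀; have := abs_nonneg t₁
      simp only [hRdef]; linarith
    · have := hmax' t ht; have := le_abs_self t₁; have := abs_nonneg t₀
      simp only [hRdef]; linarith
  set M := R + |s| with hMdef
  have htsM : ∀ t ∈ K, t - s ≤ M := by
    intro t ht
    have h1 := hR t ht
    have h2 := le_abs_self t
    have h3 := neg_abs_le s
    simp only [hMdef]; linarith
  have hM : 0 < M := lt_of_lt_of_le hδ (by have := htsM t₀ ht₀K; linarith)
  set m₀ := min δ 1 with hm₀def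
  have hm₀ : 0 < m₀ := lt_min hδ one_pos
  set C' := C * M ^ ((1 : ℝ) / 3) with hC'def
  have hC' : 0 < C' := mul_pos hC (Real.rpow_pos_of_pos hM _)
  set c₂ := 8 * C' / m₀ with hc₂def
  set c₁ := 4 * C' / m₀ * (2 * (|s| + R) + 4) with hc₁def
  have hc₂ : 0 < c₂ := div_pos (by linarith) hm₀
  have hc₁ : 0 < c₁ := by
    have h1 : 0 < 2 * (|s| + R) + 4 := by have := abs_nonneg s; linarith
    exact mul_pos (div_pos (by linarith) hm₀) h1
  clear_value δ R M m₀ C' c₂ c₁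
  -- key error estimate
  have key : ∀ t ∈ K, ∀ x y : ℝ,
      |L x s y t + (x - y) ^ 2 / (t - s)| ≤ c₁ + c₂ * |x| + c₂ * |y| := by
    intro t ht x y
    have hst : s < t := hKs ht
    have hts : 0 < t - s := sub_pos.2 hst
    have hbnd := hL x s y t hst
    set Q := x ^ 2 + y ^ 2 + s ^ 2 + t ^ 2 with hQdef
    have hQnn : 0 ≤ Real.sqrt Q := Real.sqrt_nonneg _
    have hQ : Real.sqrt Q ≤ |x| + |y| + |s| + R := by
      have hQ' : Q ≤ (|x| + |y| + |s| + |t|) ^ 2 := by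
        simp only [hQdef]
        nlinarith [mul_nonneg (abs_nonneg x) (abs_nonneg y),
          mul_nonneg (abs_nonneg x) (abs_nonneg s), mul_nonneg (abs_nonneg x) (abs_nonneg t),
          mul_nonneg (abs_nonneg y) (abs_nonneg s), mul_nonneg (abs_nonneg y) (abs_nonneg t),
          mul_nonneg (abs_nonneg s) (abs_nonneg t), sq_abs x, sq_abs y, sq_abs s, sq_abs t]
      have h1 := Real.sqrt_le_sqrt hQ'
      rw [Real.sqrt_sq (by positivity)] at h1
      have := hR t ht
      linarith
    set mn := min (t - s) 1 with hmndef
    have hmn : 0 < mn := lt_min hts one_pos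
    have hm₀mn : m₀ ≤ mn := by
      rw [hm₀def, hmndef]
      refine min_le_min ?_ le_rfl
      have := hmin' t ht; rw [hδdef]; linarith
    set z := (2 * (|x| + |y| + |s| + R) + 4) / m₀ with hzdef
    have hz0 : 0 < z := by
      refine div_pos ?_ hm₀
      have := abs_nonneg x; have := abs_nonneg y; have := abs_nonneg s; linarith
    have hz1 : 1 ≤ (2 * Real.sqrt Q + 4) / mn := by
      rw [le_div_iff₀ hmn]
      have := min_le_right (t - s) 1
      simp only [hmndef] at *
      linarith
    have hargz : (2 * Real.sqrt Q + 4) / mn ≤ z := by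
      refine div_le_div₀ (by positivity) (by linarith) hm₀ hm₀mn
    have hz1' : 1 ≤ z := le_trans hz1 hargz
    have hlogz0 : 0 ≤ Real.log z := Real.log_nonneg hz1'
    have hlogle : Real.log z ≤ 2 * Real.sqrt z := by
      have h1 : Real.log (Real.sqrt z) ≤ Real.sqrt z - 1 :=
        Real.log_le_sub_one_of_pos (Real.sqrt_pos.2 hz0)
      have h2 : Real.log (Real.sqrt z) = Real.log z / 2 := Real.log_sqrt hz0.le
      have := Real.sqrt_nonneg z
      linarith
    have hlog : (Real.log ((2 * Real.sqrt Q + 4) / mn)) ^ 2 ≤ 4 * z := by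
      calc (Real.log ((2 * Real.sqrt Q + 4) / mn)) ^ 2
          ≤ (Real.log z) ^ 2 := by
            refine pow_le_pow_left₀ (Real.log_nonneg hz1) ?_ 2
            exact Real.log_le_log (by linarith) hargz
        _ ≤ (2 * Real.sqrt z) ^ 2 := pow_le_pow_left₀ hlogz0 hlogle 2
        _ = 4 * z := by rw [mul_pow, Real.sq_sqrt hz0.le]; ring
    calc |L x s y t + (x - y) ^ 2 / (t - s)|
        ≤ C * (t - s) ^ ((1 : ℝ) / 3) *
            (Real.log ((2 * Real.sqrt Q + 4) / mn)) ^ 2 := hbnd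
      _ ≤ C' * (4 * z) := by
          refine mul_le_mul ?_ hlog (sq_nonneg _) hC'.le
          simp only [hC'def]
          exact mul_le_mul_of_nonneg_left
            (Real.rpow_le_rpow hts.le (htsM t ht) (by norm_num)) hC.le
      _ = c₁ + c₂ * |x| + c₂ * |y| := by
          simp only [hzdef, hc₁def, hc₂def]
          field_simp
          ring
  -- the constants
  refine ⟨a + c₁ + (b + c₂) ^ 2 * M / 4, ?_, b + 2 * c₂, by linarith, ?_⟩
  · have h1 : 0 ≤ (b + c₂) ^ 2 * M / 4 := by positivity
    linarith
  intro t ht y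
  have hst : s < t := hKs ht
  have hts : 0 < t - s := sub_pos.2 hst
  set A := a + c₁ + (b + c₂) ^ 2 * M / 4 with hAdef
  set B := b + 2 * c₂ with hBdef
  clear_value A B
  have hq0 : 0 ≤ (b + c₂) ^ 2 * M / 4 := by positivity
  have hup : ∀ x : ℝ, h x + L x s y t ≤ A + B * |y| := by
    intro x
    have hE := key t ht x y
    have h1 : L x s y t ≤ c₁ + c₂ * |x| + c₂ * |y| - (x - y) ^ 2 / (t - s) := by
      have := (abs_le.1 hE).2; linarith
    have h2 : (x - y) ^ 2 / M ≤ (x - y) ^ 2 / (t - s) :=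
      div_le_div_of_nonneg_left (sq_nonneg _) hts (htsM t ht)
    have h3 : |x| ≤ |x - y| + |y| := by
      have := abs_add_le (x - y) y; simpa using this
    have h3' : (b + c₂) * |x| ≤ (b + c₂) * |x - y| + (b + c₂) * |y| := by
      nlinarith [h3, hb.le, hc₂.le]
    have h4 : (b + c₂) * |x - y| - (b + c₂) ^ 2 * M / 4 ≤ (x - y) ^ 2 / M := by
      rw [le_div_iff₀ hM]
      nlinarith [sq_nonneg (2 * |x - y| - (b + c₂) * M), sq_abs (x - y)]
    have hhx := (abs_le.1 (hgrowth x)).2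
    simp only [hAdef, hBdef]
    nlinarith [h1, h2, h3', h4, hhx]
  have hbdd : BddAbove (Set.range fun x => h x + L x s y t) :=
    ⟨A + B * |y|, by rintro v ⟨x, rfl⟩; exact hup x⟩
  have hABnn : 0 ≤ A + B * |y| := by
    have h1 : 0 ≤ B * |y| := mul_nonneg (by linarith) (abs_nonneg y)
    have h2 : 0 < A := by simp only [hAdef]; linarith
    linarith
  have hupper : sSup (Set.range fun x => h x + L x s y t) ≤ A + B * |y| :=
    Real.sSup_le (by rintro v ⟨x, rfl⟩; exact hup x) hABnn
  have hfy : -(A + B * |y|) ≤ h y + L y s y t := by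
    have hE := key t ht y y
    have h0 : ((y : ℝ) - y) ^ 2 / (t - s) = 0 := by simp
    have h1 := (abs_le.1 hE).1
    rw [h0] at h1
    have h2 := (abs_le.1 (hgrowth y)).1
    simp only [hAdef, hBdef]
    nlinarith [hq0]
  have hlow : -(A + B * |y|) ≤ sSup (Set.range fun x => h x + L x s y t) :=
    le_trans hfy (le_csSup hbdd ⟨y, rfl⟩)
  exact abs_le.2 ⟨hlow, hupper⟩
end

section
/- Let L : ℝ⁴↑ → ℝ satisfy the global parabolic bound with some constant C > 0, let s ∈ ℝ, and let h : ℝ → ℝ be continuous such that limsup_{x→+∞} h(x)/x < ∞, limsup_{x→−∞} h(x)/x < ∞, liminf_{x→+∞} h(x)/x > −∞, and liminf_{x→−∞} h(x)/x > −∞. Then for every t > s: liminf_{x→+∞} h_t(x; h)/x ≥ liminf_{x→+∞} h(x)/x, limsup_{x→+∞} h_t(x; h)/x ≤ limsup_{x→+∞} h(x)/x, and the same two inequalities hold with x → −∞ in place of x → +∞. In particular, if lim_{x→+∞} h(x)/x exists, then lim_{x→+∞} h_t(x; h)/x exists and equals it, and likewise at −∞. -/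
open Filter

lemma log_sq_bound {ε u : ℝ} (hε : 0 < ε) (hu : 1 ≤ u) :
    (Real.log u) ^ 2 ≤ ε * u + 64 / ε := by
  have hu0 : (0:ℝ) < u := lt_of_lt_of_le one_pos hu
  have h4 : Real.log u = 4 * Real.log (Real.sqrt (Real.sqrt u)) := by
    rw [Real.log_sqrt (Real.sqrt_nonneg u), Real.log_sqrt hu0.le]; ring
  have hs : (0:ℝ) < Real.sqrt (Real.sqrt u) := Real.sqrt_pos.2 (Real.sqrt_pos.2 hu0)
  have hs1 : (1:ℝ) ≤ Real.sqrt (Real.sqrt u) :=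
    Real.one_le_sqrt.2 (Real.one_le_sqrt.2 hu)
  have hlog2 : 0 ≤ Real.log (Real.sqrt (Real.sqrt u)) := Real.log_nonneg hs1
  have h5 : Real.log (Real.sqrt (Real.sqrt u)) ≤ Real.sqrt (Real.sqrt u) :=
    (Real.log_le_sub_one_of_pos hs).trans (by linarith)
  have hsq : (Real.sqrt (Real.sqrt u)) ^ 2 = Real.sqrt u := Real.sq_sqrt (Real.sqrt_nonneg u)
  have h6 : (Real.log u) ^ 2 ≤ 16 * Real.sqrt u := by
    calc (Real.log u)^2 = 16 * (Real.log (Real.sqrt (Real.sqrt u)))^2 := by rw [h4]; ring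
    _ ≤ 16 * (Real.sqrt (Real.sqrt u))^2 := by nlinarith
    _ = 16 * Real.sqrt u := by rw [hsq]
  have hsu : (Real.sqrt u) ^ 2 = u := Real.sq_sqrt hu0.le
  have h7 : 16 * Real.sqrt u ≤ ε * u + 64 / ε := by
    have h8 : (0:ℝ) ≤ (ε * Real.sqrt u - 8)^2 := sq_nonneg _
    have hsu2 : (ε * Real.sqrt u)^2 = ε^2 * u := by rw [mul_pow, hsu]
    have h9 : 16 * (ε * Real.sqrt u) ≤ ε * (ε * u) + 64 := by nlinarith [h8, hsu2]
    rw [← sub_nonneg]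
    have : ε * u + 64 / ε - 16 * Real.sqrt u = (ε * (ε*u) + 64 - 16*(ε*Real.sqrt u)) / ε := by
      field_simp
    rw [this]
    have := sub_nonneg.2 h9
    positivity
  linarith

lemma err_sublinear (C s t : ℝ) (hC : 0 < C) (hst : s < t) {ε : ℝ} (hε : 0 < ε) :
    ∃ K : ℝ, ∀ z x : ℝ,
      C * (t - s) ^ ((1:ℝ)/3) *
        (Real.log ((2 * Real.sqrt (z^2 + x^2 + s^2 + t^2) + 4) / min (t-s) 1))^2
      ≤ ε * (|z| + |x|) + K := by
  set m : ℝ := min (t-s) 1 with hmdef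
  have hm : 0 < m := lt_min (by linarith) one_pos
  have hm1 : m ≤ 1 := min_le_right _ _
  set P : ℝ := C * (t - s) ^ ((1:ℝ)/3) with hPdef
  have hP : 0 < P := mul_pos hC (Real.rpow_pos_of_pos (by linarith) _)
  set ε' : ℝ := ε * m / (2 * P) with hε'def
  have hε' : 0 < ε' := by positivity
  set c₀ : ℝ := 2*(|s|+|t|)+4 with hc₀def
  refine ⟨P * (ε' * c₀ / m + 64 / ε'), fun z x => ?_⟩
  set u : ℝ := (2 * Real.sqrt (z^2 + x^2 + s^2 + t^2) + 4) / m with hudef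
  have hsq : Real.sqrt (z^2 + x^2 + s^2 + t^2) ≤ |z| + |x| + |s| + |t| := by
    rw [show |z| + |x| + |s| + |t| = Real.sqrt ((|z| + |x| + |s| + |t|)^2) from
      (Real.sqrt_sq (by positivity)).symm]
    apply Real.sqrt_le_sqrt
    nlinarith [sq_abs z, sq_abs x, sq_abs s, sq_abs t,
      mul_nonneg (abs_nonneg z) (abs_nonneg x), mul_nonneg (abs_nonneg z) (abs_nonneg s),
      mul_nonneg (abs_nonneg z) (abs_nonneg t), mul_nonneg (abs_nonneg x) (abs_nonneg s),
      mul_nonneg (abs_nonneg x) (abs_nonneg t), mul_nonneg (abs_nonneg s) (abs_nonneg t)]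
  have hu1 : 1 ≤ u := by
    rw [hudef, le_div_iff₀ hm]
    have := Real.sqrt_nonneg (z^2 + x^2 + s^2 + t^2)
    linarith
  have hub : u ≤ (2*(|z| + |x|) + c₀) / m := by
    rw [hudef]
    exact div_le_div_of_nonneg_right (by rw [hc₀def]; linarith) hm.le
  have h1 : (Real.log u)^2 ≤ ε' * ((2*(|z| + |x|) + c₀) / m) + 64/ε' := by
    refine (log_sq_bound hε' hu1).trans ?_
    have := mul_le_mul_of_nonneg_left hub hε'.le
    linarith
  have h2 : P * ((Real.log u)^2) ≤ P * (ε' * ((2*(|z| + |x|) + c₀) / m) + 64/ε') :=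
    mul_le_mul_of_nonneg_left h1 hP.le
  have h3 : P * (ε' * ((2*(|z| + |x|) + c₀) / m) + 64/ε')
      = ε * (|z| + |x|) + P * (ε' * c₀ / m + 64 / ε') := by
    rw [hε'def]
    field_simp
    ring
  linarith [h2, h3.le]

lemma quad_bound {τ : ℝ} (hτ : 0 < τ) (c x z : ℝ) :
    c * z - (z - x)^2 / τ ≤ c * x + c^2 * τ / 4 := by
  have h2 : c * (z - x) ≤ (z - x)^2 / τ + c^2 * τ / 4 := by
    rw [← sub_nonneg]
    have hexp : (z-x)^2/τ + c^2*τ/4 - c*(z-x) = ((z-x) - c*τ/2)^2 / τ := by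
      field_simp; ring
    rw [hexp]; positivity
  linarith

lemma upper_core {τ a b B ε K : ℝ} (hτ : 0 < τ) (hε : 0 < ε) (g : ℝ → ℝ → ℝ)
    (hg : ∀ z x, g z x ≤ (if 0 ≤ z then a*z else b*z) + B - (z-x)^2/τ + ε*(|z|+|x|) + K) :
    ∃ D : ℝ, (∀ x, 0 ≤ x → ∀ z, g z x ≤ (a+2*ε)*x + D) ∧
      (∀ x, x ≤ 0 → ∀ z, g z x ≤ (b-2*ε)*x + D) := by
  refine ⟨B + K + ((a+ε)^2*τ/4 + (b-ε)^2*τ/4), ?_, ?_⟩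
  · intro x hx z
    have hgz := hg z x
    rw [abs_of_nonneg hx] at hgz
    rcases le_or_gt 0 z with hz | hz
    · rw [if_pos hz, abs_of_nonneg hz] at hgz
      have h1 := quad_bound hτ (a+ε) x z
      nlinarith [sq_nonneg (b-ε), hτ]
    · rw [if_neg (not_le.2 hz), abs_of_neg hz] at hgz
      have hsplit : (z^2 + x^2)/τ ≤ (z-x)^2/τ :=
        div_le_div_of_nonneg_right (by nlinarith [mul_nonpos_of_nonpos_of_nonneg hz.le hx]) hτ.le
      have h1 : (b-ε)*z - z^2/τ ≤ (b-ε)^2*τ/4 := by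
        have := quad_bound hτ (b-ε) 0 z
        simpa using this
      have h2 : -(x^2/τ) ≤ (a+ε)*x + (a+ε)^2*τ/4 := by
        have := quad_bound hτ (a+ε) x 0
        have e : (0 - x)^2 = x^2 := by ring
        rw [e] at this
        linarith
      have hd : (z^2 + x^2)/τ = z^2/τ + x^2/τ := add_div _ _ _
      linarith
  · intro x hx z
    have hgz := hg z x
    rw [abs_of_nonpos hx] at hgz
    rcases le_or_gt 0 z with hz | hz
    · rw [if_pos hz, abs_of_nonneg hz] at hgz
      have hsplit : (z^2 + x^2)/τ ≤ (z-x)^2/τ :=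
        div_le_div_of_nonneg_right (by nlinarith [mul_nonneg hz (neg_nonneg.2 hx)]) hτ.le
      have h1 : (a+ε)*z - z^2/τ ≤ (a+ε)^2*τ/4 := by
        have := quad_bound hτ (a+ε) 0 z
        simpa using this
      have h2 : -(x^2/τ) ≤ (b-ε)*x + (b-ε)^2*τ/4 := by
        have := quad_bound hτ (b-ε) x 0
        have e : (0 - x)^2 = x^2 := by ring
        rw [e] at this
        linarith
      have hd : (z^2 + x^2)/τ = z^2/τ + x^2/τ := add_div _ _ _
      linarith
    · rw [if_neg (not_le.2 hz), abs_of_neg hz] at hgz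
      have h1 := quad_bound hτ (b-ε) x z
      nlinarith [sq_nonneg (a+ε), hτ]

lemma piecewise_bound (h : ℝ → ℝ) (hh : Continuous h) (a b : ℝ)
    (ha : ∀ᶠ z in atTop, h z ≤ a * z) (hb : ∀ᶠ z in atBot, h z ≤ b * z) :
    ∃ B : ℝ, ∀ z : ℝ, h z ≤ (if 0 ≤ z then a * z else b * z) + B := by
  obtain ⟨R₁, hR₁⟩ := ha.exists_forall_of_atTop
  obtain ⟨R₂, hR₂⟩ := hb.exists_forall_of_atBot
  set R : ℝ := max (|R₁|) (|R₂|) + 1 with hR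
  have hR0 : 0 < R := by positivity
  obtain ⟨M0, hM01, hM02⟩ := (isCompact_Icc (a := -R) (b := R)).exists_isMaxOn
    ⟨0, Set.mem_Icc.2 ⟨by linarith, by linarith⟩⟩ hh.continuousOn
  have hM : ∀ z ∈ Set.Icc (-R) R, h z ≤ h M0 := fun z hz => hM02 hz
  refine ⟨|h M0| + (|a| + |b|) * R, fun z => ?_⟩
  rcases le_or_gt z R with hzR | hzR
  · rcases le_or_gt (-R) z with hzL | hzL
    · -- z in [-R, R]
      have h1 : h z ≤ h M0 := hM z ⟨hzL, hzR⟩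
      have h2 : -((|a| + |b|) * R) ≤ (if 0 ≤ z then a * z else b * z) := by
        split_ifs with hz
        · have : |a * z| ≤ (|a| + |b|) * R := by
            rw [abs_mul]
            have := abs_nonneg b
            have hz' : |z| ≤ R := abs_le.2 ⟨hzL, hzR⟩
            nlinarith [abs_nonneg a, abs_nonneg (z)]
          linarith [neg_abs_le (a * z)]
        · have : |b * z| ≤ (|a| + |b|) * R := by
            rw [abs_mul]
            have hz' : |z| ≤ R := abs_le.2 ⟨hzL, hzR⟩
            nlinarith [abs_nonneg a, abs_nonneg b, abs_nonneg z]
          linarith [neg_abs_le (b * z)]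
      have h3 : h M0 ≤ |h M0| := le_abs_self _
      linarith
    · -- z < -R ≤ R₂
      have hz2 : z ≤ R₂ := by
        have : -R ≤ R₂ := by
          have := neg_abs_le R₂; rw [hR] at *; linarith [le_max_right (|R₁|) (|R₂|)]
        linarith
      have h1 : h z ≤ b * z := hR₂ z hz2
      have hz0 : ¬ (0 ≤ z) := by linarith
      rw [if_neg hz0]
      have : 0 ≤ |h M0| + (|a| + |b|) * R := by positivity
      linarith
  · -- z > R ≥ R₁
    have hz1 : R₁ ≤ z := by
      have : R₁ ≤ R := by
        have := le_abs_self R₁; rw [hR] at *; linarith [le_max_left (|R₁|) (|R₂|)]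
      linarith
    have h1 : h z ≤ a * z := hR₁ z hz1
    have hz0 : (0:ℝ) ≤ z := by linarith
    rw [if_pos hz0]
    have : 0 ≤ |h M0| + (|a| + |b|) * R := by positivity
    linarith

/-- Preservation of asymptotic slopes: if `h` has finite asymptotic slope bounds at
`±∞` (limsup < ∞ and liminf > −∞ of `h(x)/x`), then for every `t > s` the evolved
profile `h_t(x;h) = sup_z {h(z) + L(z,s;x,t)}` satisfies
`liminf h_t(x;h)/x ≥ liminf h(x)/x` and `limsup h_t(x;h)/x ≤ limsup h(x)/x` at both
`+∞` and `−∞`; in particular existing limits of `h(x)/x` are preserved. -/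
theorem stmt9 (C : ℝ) (hC : 0 < C) (L : ℝ → ℝ → ℝ → ℝ → ℝ)
    (hLcont : ContinuousOn (fun p : ℝ × ℝ × ℝ × ℝ => L p.1 p.2.1 p.2.2.1 p.2.2.2)
      {p : ℝ × ℝ × ℝ × ℝ | p.2.1 < p.2.2.2})
    (hL : GlobalParabolicBound C L)
    (s : ℝ) (h : ℝ → ℝ) (hh : Continuous h)
    (hls1 : limsup (fun x => ((h x / x : ℝ) : EReal)) atTop < ⊤)
    (hls2 : limsup (fun x => ((h x / x : ℝ) : EReal)) atBot < ⊤)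
    (hli1 : ⊥ < liminf (fun x => ((h x / x : ℝ) : EReal)) atTop)
    (hli2 : ⊥ < liminf (fun x => ((h x / x : ℝ) : EReal)) atBot) :
    ∀ t : ℝ, s < t →
      (liminf (fun x => ((h x / x : ℝ) : EReal)) atTop ≤
        liminf (fun x => ((sSup (Set.range (fun z => h z + L z s x t)) / x : ℝ) : EReal)) atTop) ∧
      (limsup (fun x => ((sSup (Set.range (fun z => h z + L z s x t)) / x : ℝ) : EReal)) atTop ≤
        limsup (fun x => ((h x / x : ℝ) : EReal)) atTop) ∧
      (liminf (fun x => ((h x / x : ℝ) : EReal)) atBot ≤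
        liminf (fun x => ((sSup (Set.range (fun z => h z + L z s x t)) / x : ℝ) : EReal)) atBot) ∧
      (limsup (fun x => ((sSup (Set.range (fun z => h z + L z s x t)) / x : ℝ) : EReal)) atBot ≤
        limsup (fun x => ((h x / x : ℝ) : EReal)) atBot) ∧
      (∀ l : ℝ, Tendsto (fun x => h x / x) atTop (nhds l) →
        Tendsto (fun x => sSup (Set.range (fun z => h z + L z s x t)) / x) atTop (nhds l)) ∧
      (∀ l : ℝ, Tendsto (fun x => h x / x) atBot (nhds l) →
        Tendsto (fun x => sSup (Set.range (fun z => h z + L z s x t)) / x) atBot (nhds l)) := by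
  intro t ht
  have hτ : (0:ℝ) < t - s := by linarith
  -- eventual slope bound extraction
  have hevta : ∀ a : ℝ, limsup (fun x => ((h x / x : ℝ) : EReal)) atTop < (a:EReal) →
      ∀ᶠ z in atTop, h z ≤ a * z := by
    intro a ha
    have h1 := eventually_lt_of_limsup_lt ha
    filter_upwards [h1, eventually_gt_atTop (0:ℝ)] with z h2 h3
    rw [EReal.coe_lt_coe_iff] at h2
    have := (div_lt_iff₀ h3).1 h2
    linarith [this]
  have hevtb : ∀ b : ℝ, (b:EReal) < liminf (fun x => ((h x / x : ℝ) : EReal)) atBot →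
      ∀ᶠ z in atBot, h z ≤ b * z := by
    intro b hb
    have h1 := eventually_lt_of_lt_liminf hb
    filter_upwards [h1, eventually_lt_atBot (0:ℝ)] with z h2 h3
    rw [EReal.coe_lt_coe_iff] at h2
    have := (lt_div_iff_of_neg h3).1 h2
    linarith [this]
  obtain ⟨a₀, ha₀, -⟩ := EReal.exists_between_coe_real hls1
  obtain ⟨b₀, -, hb₀⟩ := EReal.exists_between_coe_real hli2
  -- main upper bound package
  have hpt : ∀ a b : ℝ, (∀ᶠ z in atTop, h z ≤ a*z) → (∀ᶠ z in atBot, h z ≤ b*z) →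
      ∀ ε : ℝ, 0 < ε → ∃ D : ℝ,
        (∀ x, 0 ≤ x → sSup (Set.range (fun z => h z + L z s x t)) ≤ (a+2*ε)*x + D) ∧
        (∀ x, x ≤ 0 → sSup (Set.range (fun z => h z + L z s x t)) ≤ (b-2*ε)*x + D) ∧
        (∀ x, BddAbove (Set.range (fun z => h z + L z s x t))) := by
    intro a b ha hb ε hε
    obtain ⟨B, hB⟩ := piecewise_bound h hh a b ha hb
    obtain ⟨K, hK⟩ := err_sublinear C s t hC ht hε
    have hg : ∀ z x, h z + L z s x t ≤
        (if 0 ≤ z then a*z else b*z) + B - (z-x)^2/(t-s) + ε*(|z|+|x|) + K := by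
      intro z x
      have h1 := (abs_le.1 (hL z s x t ht)).2
      have h2 := hK z x
      have h3 := hB z
      linarith
    obtain ⟨D, hD1, hD2⟩ := upper_core hτ hε _ hg
    have hne : ∀ x, (Set.range (fun z => h z + L z s x t)).Nonempty :=
      fun x => ⟨_, Set.mem_range_self 0⟩
    refine ⟨D, fun x hx => csSup_le (hne x) ?_, fun x hx => csSup_le (hne x) ?_, fun x => ?_⟩
    · rintro w ⟨z, rfl⟩; exact hD1 x hx z
    · rintro w ⟨z, rfl⟩; exact hD2 x hx z
    · rcases le_total 0 x with hx | hx
      · exact ⟨(a+2*ε)*x + D, by rintro w ⟨z, rfl⟩; exact hD1 x hx z⟩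
      · exact ⟨(b-2*ε)*x + D, by rintro w ⟨z, rfl⟩; exact hD2 x hx z⟩
  obtain ⟨D₀, -, -, hBdd⟩ := hpt a₀ b₀ (hevta a₀ ha₀) (hevtb b₀ hb₀) 1 one_pos
  -- lower bound on the sup
  have hlow : ∀ ε : ℝ, 0 < ε → ∃ K' : ℝ, ∀ x,
      h x - (2*ε*|x| + K') ≤ sSup (Set.range (fun z => h z + L z s x t)) := by
    intro ε hε
    obtain ⟨K, hK⟩ := err_sublinear C s t hC ht hε
    refine ⟨K, fun x => ?_⟩
    have h1 := (abs_le.1 (hL x s x t ht)).1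
    have h0 : (x - x)^2/(t-s) = 0 := by simp
    rw [h0] at h1
    have h2 := hK x x
    have h3 : h x + L x s x t ≤ sSup (Set.range (fun z => h z + L z s x t)) :=
      le_csSup (hBdd x) (Set.mem_range_self x)
    linarith
  -- G1
  have hG1 : liminf (fun x => ((h x / x : ℝ) : EReal)) atTop ≤
      liminf (fun x => ((sSup (Set.range (fun z => h z + L z s x t)) / x : ℝ) : EReal)) atTop := by
    by_contra hcon
    push_neg at hcon
    obtain ⟨r, hr1, hr2⟩ := EReal.exists_between_coe_real hcon
    obtain ⟨r', hr'1, hr'2⟩ := EReal.exists_between_coe_real hr2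
    rw [EReal.coe_lt_coe_iff] at hr'1
    have hε : (0:ℝ) < (r' - r)/3 := by linarith
    obtain ⟨K', hK'⟩ := hlow _ hε
    have hev := eventually_lt_of_lt_liminf hr'2
    have key : ∀ᶠ x in atTop,
        (r:EReal) ≤ ((sSup (Set.range (fun z => h z + L z s x t)) / x : ℝ) : EReal) := by
      filter_upwards [hev, eventually_gt_atTop (0:ℝ), eventually_ge_atTop (K'/((r'-r)/3))]
        with x h1 h2 h3
      rw [EReal.coe_lt_coe_iff] at h1
      rw [EReal.coe_le_coe_iff]
      have hhx : r' * x < h x := (lt_div_iff₀ h2).1 h1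
      have hH := hK' x
      rw [abs_of_pos h2] at hH
      have hKx : K' ≤ ((r'-r)/3) * x := by
        rw [div_le_iff₀ hε] at h3; linarith
      have : r * x ≤ sSup (Set.range (fun z => h z + L z s x t)) := by nlinarith
      exact (le_div_iff₀ h2).2 this
    exact absurd (le_liminf_of_le (by isBoundedDefault) key) (not_le.2 hr1)
  -- G2
  have hG2 : limsup (fun x => ((sSup (Set.range (fun z => h z + L z s x t)) / x : ℝ) : EReal)) atTop ≤
      limsup (fun x => ((h x / x : ℝ) : EReal)) atTop := by
    by_contra hcon
    push_neg at hcon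
    obtain ⟨r, hr1, hr2⟩ := EReal.exists_between_coe_real hcon
    obtain ⟨r'', hr''1, hr''2⟩ := EReal.exists_between_coe_real hr1
    rw [EReal.coe_lt_coe_iff] at hr''2
    have hε : (0:ℝ) < (r - r'')/3 := by linarith
    obtain ⟨D, hD1, -, -⟩ := hpt r'' b₀ (hevta r'' hr''1) (hevtb b₀ hb₀) _ hε
    have key : ∀ᶠ x in atTop,
        ((sSup (Set.range (fun z => h z + L z s x t)) / x : ℝ) : EReal) ≤ (r:EReal) := by
      filter_upwards [eventually_gt_atTop (0:ℝ), eventually_ge_atTop (D/((r-r'')/3))]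
        with x h2 h3
      rw [EReal.coe_le_coe_iff]
      have hDx : D ≤ ((r-r'')/3) * x := by rw [div_le_iff₀ hε] at h3; linarith
      have h4 := hD1 x h2.le
      have : sSup (Set.range (fun z => h z + L z s x t)) ≤ r * x := by nlinarith
      exact (div_le_iff₀ h2).2 this
    exact absurd (limsup_le_of_le (by isBoundedDefault) key) (not_le.2 hr2)
  -- G3
  have hG3 : liminf (fun x => ((h x / x : ℝ) : EReal)) atBot ≤
      liminf (fun x => ((sSup (Set.range (fun z => h z + L z s x t)) / x : ℝ) : EReal)) atBot := by
    by_contra hcon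
    push_neg at hcon
    obtain ⟨r, hr1, hr2⟩ := EReal.exists_between_coe_real hcon
    obtain ⟨r'', hr''1, hr''2⟩ := EReal.exists_between_coe_real hr2
    rw [EReal.coe_lt_coe_iff] at hr''1
    have hε : (0:ℝ) < (r'' - r)/3 := by linarith
    obtain ⟨D, -, hD2, -⟩ := hpt a₀ r'' (hevta a₀ ha₀) (hevtb r'' hr''2) _ hε
    have key : ∀ᶠ x in atBot,
        (r:EReal) ≤ ((sSup (Set.range (fun z => h z + L z s x t)) / x : ℝ) : EReal) := by
      filter_upwards [eventually_lt_atBot (0:ℝ), eventually_le_atBot (-(D/((r''-r)/3)))]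
        with x h2 h3
      rw [EReal.coe_le_coe_iff]
      have hDx : D ≤ ((r''-r)/3) * (-x) := by
        have : D/((r''-r)/3) ≤ -x := by linarith
        rw [div_le_iff₀ hε] at this; linarith
      have h4 := hD2 x h2.le
      have h5 : sSup (Set.range (fun z => h z + L z s x t)) ≤ r * x := by nlinarith
      have h6 := div_le_div_of_nonpos_of_le h2.le h5
      rwa [mul_div_assoc, div_self (ne_of_lt h2), mul_one] at h6
    exact absurd (le_liminf_of_le (by isBoundedDefault) key) (not_le.2 hr1)
  -- G4
  have hG4 : limsup (fun x => ((sSup (Set.range (fun z => h z + L z s x t)) / x : ℝ) : EReal)) atBot ≤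
      limsup (fun x => ((h x / x : ℝ) : EReal)) atBot := by
    by_contra hcon
    push_neg at hcon
    obtain ⟨r, hr1, hr2⟩ := EReal.exists_between_coe_real hcon
    obtain ⟨r'', hr''1, hr''2⟩ := EReal.exists_between_coe_real hr1
    rw [EReal.coe_lt_coe_iff] at hr''2
    have hε : (0:ℝ) < (r - r'')/3 := by linarith
    obtain ⟨K', hK'⟩ := hlow _ hε
    have hev := eventually_lt_of_limsup_lt hr''1
    have key : ∀ᶠ x in atBot,
        ((sSup (Set.range (fun z => h z + L z s x t)) / x : ℝ) : EReal) ≤ (r:EReal) := by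
      filter_upwards [hev, eventually_lt_atBot (0:ℝ), eventually_le_atBot (-(K'/((r-r'')/3)))]
        with x h1 h2 h3
      rw [EReal.coe_lt_coe_iff] at h1
      rw [EReal.coe_le_coe_iff]
      have hhx : r'' * x < h x := by
        have := (div_lt_iff_of_neg h2).1 h1
        linarith
      have hH := hK' x
      rw [abs_of_neg h2] at hH
      have hKx : K' ≤ ((r-r'')/3) * (-x) := by
        have : K'/((r-r'')/3) ≤ -x := by linarith
        rw [div_le_iff₀ hε] at this; linarith
      have h5 : r * x ≤ sSup (Set.range (fun z => h z + L z s x t)) := by nlinarith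
      have h6 := div_le_div_of_nonpos_of_le h2.le h5
      rwa [mul_div_assoc, div_self (ne_of_lt h2), mul_one] at h6
    exact absurd (limsup_le_of_le (by isBoundedDefault) key) (not_le.2 hr2)
  refine ⟨hG1, hG2, hG3, hG4, ?_, ?_⟩
  · intro l hl
    have hl' : Tendsto (fun x => ((h x / x : ℝ) : EReal)) atTop (nhds (l:EReal)) :=
      EReal.tendsto_coe.2 hl
    have e1 : liminf (fun x => ((h x / x : ℝ) : EReal)) atTop = (l:EReal) := hl'.liminf_eq
    have e2 : limsup (fun x => ((h x / x : ℝ) : EReal)) atTop = (l:EReal) := hl'.limsup_eq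
    have := tendsto_of_le_liminf_of_limsup_le (e1 ▸ hG1) (e2 ▸ hG2)
    exact EReal.tendsto_coe.1 this
  · intro l hl
    have hl' : Tendsto (fun x => ((h x / x : ℝ) : EReal)) atBot (nhds (l:EReal)) :=
      EReal.tendsto_coe.2 hl
    have e1 : liminf (fun x => ((h x / x : ℝ) : EReal)) atBot = (l:EReal) := hl'.liminf_eq
    have e2 : limsup (fun x => ((h x / x : ℝ) : EReal)) atBot = (l:EReal) := hl'.limsup_eq
    have := tendsto_of_le_liminf_of_limsup_le (e1 ▸ hG3) (e2 ▸ hG4)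
    exact EReal.tendsto_coe.1 this
end

section
/- Let Y : ℤ×ℤ≥1 → [0,∞) be a family of weights and h : ℤ → ℝ, and assume that for every (m,n) ∈ ℤ×ℤ≥1 the supremum defining d^h(m,n) is finite. For n ≥ 1 let Yⁿ := (Y_{(m,n)})_{m∈ℤ}, set I⁰_i := h(i) − h(i−1) for i ∈ ℤ, and inductively define Iⁿ := D(Yⁿ, Iⁿ⁻¹) and Jⁿ := S(Yⁿ, Iⁿ⁻¹) for n ≥ 1. Then these recursions are well defined (all the suprema involved are finite) and for all n ≥ 1 and m ∈ ℤ, Iⁿ_m = d^h(m,n) − d^h(m−1,n) and Jⁿ_m = d^h(m,n) − d^h(m,n−1). -/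
open Finset

/-- The number of steps of an up-right path from `x` to `y` (when `x ≤ y`). -/
def lppSteps (x y : ℤ × ℤ) : ℕ := ((y.1 - x.1) + (y.2 - x.2)).toNat

/-- `p` is an up-right path from `x` to `y`. -/
def IsUpRightPath (x y : ℤ × ℤ) (p : ℕ → ℤ × ℤ) : Prop :=
  p 0 = x ∧ p (lppSteps x y) = y ∧
    ∀ k : ℕ, k < lppSteps x y →
      p (k + 1) = p k + ((1 : ℤ), (0 : ℤ)) ∨ p (k + 1) = p k + ((0 : ℤ), (1 : ℤ))

/-- The weight of an up-right path from `x` to `y` (both endpoints included). -/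
noncomputable def pathWeight (Y : ℤ → ℤ → ℝ) (x y : ℤ × ℤ) (p : ℕ → ℤ × ℤ) : ℝ :=
  ∑ k ∈ Finset.range (lppSteps x y + 1), Y (p k).1 (p k).2

/-- The bulk last-passage time `d(x,y)`. -/
noncomputable def lpp (Y : ℤ → ℤ → ℝ) (x y : ℤ × ℤ) : ℝ :=
  sSup {v : ℝ | ∃ p : ℕ → ℤ × ℤ, IsUpRightPath x y p ∧ v = pathWeight Y x y p}

/-- Last-passage time with boundary data `h` on the line `n = 0`. -/
noncomputable def dh (Y : ℤ → ℤ → ℝ) (h : ℤ → ℝ) (m n : ℤ) : ℝ :=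
  if n = 0 then h m
  else sSup {v : ℝ | ∃ k : ℤ, k ≤ m ∧ v = h k + lpp Y (k, 1) (m, n)}

/-- The canonical antiderivative of a sequence `I : ℤ → ℝ`: the function `F` with
`F 0 = 0` and `F k − F (k−1) = I k` for all `k ∈ ℤ`. -/
noncomputable def Fcanon (I : ℤ → ℝ) (n : ℤ) : ℝ :=
  if 0 ≤ n then ∑ i ∈ Finset.Icc (1 : ℤ) n, I i
  else -∑ i ∈ Finset.Icc (n + 1) (0 : ℤ), I i

/-- `F̃_ℓ = sup_{k ≤ ℓ} {F_k + ∑_{i=k}^ℓ ω_i}` for the canonical `F` with increments `I`. -/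
noncomputable def Ftil (ω I : ℤ → ℝ) (l : ℤ) : ℝ :=
  sSup {v : ℝ | ∃ k : ℤ, k ≤ l ∧ v = Fcanon I k + ∑ i ∈ Finset.Icc k l, ω i}

/-- Queueing departure map: `D(ω,I)_ℓ = F̃_ℓ − F̃_{ℓ−1}`. -/
noncomputable def Dmap (ω I : ℤ → ℝ) (l : ℤ) : ℝ := Ftil ω I l - Ftil ω I (l - 1)

/-- Queueing sojourn map: `S(ω,I)_k = F̃_k − F_k`. -/
noncomputable def Smap (ω I : ℤ → ℝ) (k : ℤ) : ℝ := Ftil ω I k - Fcanon I k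

/-- The recursively defined increment sequences: `I⁰_i = h(i) − h(i−1)` and
`Iⁿ = D(Yⁿ, Iⁿ⁻¹)` where `Yⁿ` is the weight sequence on level `n`. -/
noncomputable def Iseq (Y : ℤ → ℤ → ℝ) (h : ℤ → ℝ) : ℕ → ℤ → ℝ
  | 0 => fun i => h i - h (i - 1)
  | n + 1 => Dmap (fun i => Y i ((n : ℤ) + 1)) (Iseq Y h n)

/-- `Jseq Y h n = S(Y^{n+1}, Iⁿ)`, i.e. the paper's `J^{n+1}`. -/
noncomputable def Jseq (Y : ℤ → ℤ → ℝ) (h : ℤ → ℝ) (n : ℕ) : ℤ → ℝ :=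
  Smap (fun i => Y i ((n : ℤ) + 1)) (Iseq Y h n)


/-!
An up-right path visits distinct sites of the rectangle `[x, y]`, so its weight is at most the
sum of `|Y|` over that rectangle and every `d(x, y)` is a finite supremum. Cutting a path to
`(m, n + 1)` just before it enters row `n + 1` gives the row recursion
`d^h(m, n + 1) = sup_{k ≤ m} {d^h(k, n) + ∑_{i=k}^{m} Y(i, n + 1)}`.
By induction on `n`, `d^h(·, n) - d^h(0, n)` is the antiderivative `F` of `Iⁿ`, so the queueing
supremum `F̃` at level `n + 1` is exactly this recursion: `F̃ = d^h(·, n + 1) - d^h(0, n)`.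
Its increments are `Iⁿ⁺¹`, and `F̃ - F` is `Jⁿ⁺¹`.
-/

namespace IsUpRightPath

variable {x y : ℤ × ℤ} {p : ℕ → ℤ × ℤ}

theorem fst_add_snd (hp : IsUpRightPath x y p) {k : ℕ} (hk : k ≤ lppSteps x y) :
    (p k).1 + (p k).2 = x.1 + x.2 + k := by
  induction k with
  | zero => simp [hp.1]
  | succ k ih =>
    have := ih (by omega)
    rcases hp.2.2 k (by omega) with h | h <;> rw [h] <;> simp <;> omega

theorem monotoneOn (hp : IsUpRightPath x y p) : MonotoneOn p (Set.Iic (lppSteps x y)) := by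
  intro k _ l hl hkl
  induction l, hkl using Nat.le_induction with
  | base => rfl
  | succ l _ ih =>
    have hl' : l < lppSteps x y := Nat.lt_of_succ_le hl
    refine (ih hl'.le).trans ?_
    rcases hp.2.2 l hl' with h | h <;> rw [h] <;> simp [Prod.le_def]

theorem mem_Icc (hp : IsUpRightPath x y p) {k : ℕ} (hk : k ≤ lppSteps x y) :
    p k ∈ Set.Icc x y := by
  refine ⟨hp.1 ▸ hp.monotoneOn (Nat.zero_le _) hk (Nat.zero_le k), ?_⟩
  exact hp.2.1 ▸ hp.monotoneOn hk (Set.mem_Iic.2 le_rfl) hk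

theorem le (hp : IsUpRightPath x y p) : x ≤ y :=
  (hp.mem_Icc (Nat.zero_le _)).1.trans (hp.mem_Icc (Nat.zero_le _)).2

theorem injOn (hp : IsUpRightPath x y p) : Set.InjOn p (Set.Iic (lppSteps x y)) := by
  intro k hk l hl hkl
  have := hp.fst_add_snd hk
  rw [hkl, hp.fst_add_snd hl] at this
  exact_mod_cast (add_left_cancel this).symm

theorem lppSteps_apply (hp : IsUpRightPath x y p) {k : ℕ} (hk : k ≤ lppSteps x y) :
    lppSteps x (p k) = k := by
  have := hp.fst_add_snd hk
  simp only [lppSteps]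
  omega

theorem restrict (hp : IsUpRightPath x y p) {k : ℕ} (hk : k ≤ lppSteps x y) :
    IsUpRightPath x (p k) p := by
  refine ⟨hp.1, by rw [hp.lppSteps_apply hk], fun i hi => hp.2.2 i ?_⟩
  rw [hp.lppSteps_apply hk] at hi
  omega

theorem apply_of_snd_eq (hp : IsUpRightPath x y p) {t i : ℕ} (hti : t ≤ i)
    (hi : i ≤ lppSteps x y) (ht : (p t).2 = y.2) : p i = ((p t).1 + (i - t : ℕ), y.2) := by
  have hsnd : (p i).2 = y.2 :=
    le_antisymm (hp.mem_Icc hi).2.2 (ht ▸ (hp.monotoneOn (hti.trans hi) hi hti).2)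
  have := hp.fst_add_snd hi
  have := hp.fst_add_snd (hti.trans hi)
  ext <;> push_cast [hti] <;> omega

end IsUpRightPath

theorem exists_isUpRightPath {x y : ℤ × ℤ} (hxy : x ≤ y) : ∃ p, IsUpRightPath x y p := by
  obtain ⟨h1, h2⟩ := hxy
  have hs : (lppSteps x y : ℤ) = (y.1 - x.1) + (y.2 - x.2) := by
    simp only [lppSteps]; omega
  refine ⟨fun k => if (k : ℤ) ≤ y.1 - x.1 then (x.1 + k, x.2)
    else (y.1, x.2 + (k - (y.1 - x.1))), by simp; omega, ?_, fun k hk => ?_⟩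
  · dsimp only
    split_ifs <;> ext <;> simp <;> omega
  · dsimp only
    have : (k : ℤ) < lppSteps x y := by exact_mod_cast hk
    by_cases hc : (k : ℤ) + 1 ≤ y.1 - x.1
    · left
      rw [if_pos (by push_cast; omega), if_pos (by omega)]
      ext <;> simp; omega
    · right
      rw [if_neg (by push_cast; omega)]
      split_ifs <;> ext <;> simp <;> omega

theorem Finset.sum_range_toNat_sub_add_one {M : Type*} [AddCommMonoid M] (f : ℤ → M) {k m : ℤ}
    (hkm : k ≤ m) : ∑ j ∈ range ((m - k).toNat + 1), f (k + j) = ∑ i ∈ Icc k m, f i := by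
  refine sum_bij' (fun j _ => k + (j : ℤ)) (fun i _ => (i - k).toNat) ?_ ?_ ?_ ?_ (fun _ _ => rfl)
  all_goals intro a ha; simp only [mem_range, mem_Icc] at ha ⊢; omega

section Weights

variable (Y : ℤ → ℤ → ℝ) {x y : ℤ × ℤ} {p : ℕ → ℤ × ℤ}

theorem pathWeight_le_sum_abs (hp : IsUpRightPath x y p) :
    pathWeight Y x y p ≤ ∑ q ∈ Icc x y, |Y q.1 q.2| := by
  have hinj : Set.InjOn p (range (lppSteps x y + 1)) := fun k hk l hl =>
    hp.injOn (Nat.lt_succ_iff.1 (mem_range.1 hk)) (Nat.lt_succ_iff.1 (mem_range.1 hl))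
  have hsub : (range (lppSteps x y + 1)).image p ⊆ Icc x y := by
    rintro _ hq
    obtain ⟨k, hk, rfl⟩ := mem_image.1 hq
    exact mem_Icc.2 (hp.mem_Icc (Nat.lt_succ_iff.1 (mem_range.1 hk)))
  calc pathWeight Y x y p = ∑ q ∈ (range (lppSteps x y + 1)).image p, Y q.1 q.2 :=
        by rw [pathWeight, sum_image hinj]
    _ ≤ ∑ q ∈ (range (lppSteps x y + 1)).image p, |Y q.1 q.2| :=
        sum_le_sum fun _ _ => le_abs_self _
    _ ≤ ∑ q ∈ Icc x y, |Y q.1 q.2| :=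
        sum_le_sum_of_subset_of_nonneg hsub fun _ _ _ => abs_nonneg _

theorem isLUB_lpp (hxy : x ≤ y) :
    IsLUB {v | ∃ p, IsUpRightPath x y p ∧ v = pathWeight Y x y p} (lpp Y x y) := by
  obtain ⟨p, hp⟩ := exists_isUpRightPath hxy
  refine isLUB_csSup ⟨_, p, hp, rfl⟩ ⟨∑ q ∈ Icc x y, |Y q.1 q.2|, ?_⟩
  rintro _ ⟨p, hp, rfl⟩
  exact pathWeight_le_sum_abs Y hp

theorem pathWeight_le_lpp (hp : IsUpRightPath x y p) : pathWeight Y x y p ≤ lpp Y x y :=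
  (isLUB_lpp Y hp.le).1 ⟨p, hp, rfl⟩

theorem lpp_row {k m n : ℤ} (hkm : k ≤ m) : lpp Y (k, n) (m, n) = ∑ i ∈ Icc k m, Y i n := by
  have hsteps : lppSteps (k, n) (m, n) = (m - k).toNat := by simp [lppSteps]
  have hweight : ∀ p, IsUpRightPath (k, n) (m, n) p →
      pathWeight Y (k, n) (m, n) p = ∑ i ∈ Icc k m, Y i n := by
    intro p hp
    rw [pathWeight, hsteps, ← sum_range_toNat_sub_add_one _ hkm]
    refine sum_congr rfl fun j hj => ?_
    have hj : j ≤ lppSteps (k, n) (m, n) := by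
      rw [hsteps]; exact Nat.lt_succ_iff.1 (mem_range.1 hj)
    rw [hp.apply_of_snd_eq (Nat.zero_le j) hj (by rw [hp.1]), hp.1]
    simp
  obtain ⟨p, hp⟩ := exists_isUpRightPath (x := (k, n)) (y := (m, n)) ⟨hkm, le_rfl⟩
  refine le_antisymm ((isLUB_lpp Y hp.le).2 ?_) (hweight p hp ▸ pathWeight_le_lpp Y hp)
  rintro _ ⟨q, hq, rfl⟩
  exact (hweight q hq).le

end Weights

section Rows

variable (Y : ℤ → ℤ → ℝ) {x : ℤ × ℤ} {p : ℕ → ℤ × ℤ} {k m n : ℤ}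

theorem pathWeight_eq_add_sum_row {s : ℕ} (hx : x ≤ (k, n)) (hs : lppSteps x (k, n) = s)
    (hkm : k ≤ m) (hrow : ∀ i ≤ (m - k).toNat, p (s + 1 + i) = (k + i, n + 1)) :
    pathWeight Y x (m, n + 1) p = pathWeight Y x (k, n) p + ∑ i ∈ Icc k m, Y i (n + 1) := by
  obtain ⟨h1, h2⟩ := hx
  have hlen : lppSteps x (m, n + 1) + 1 = (s + 1) + ((m - k).toNat + 1) := by
    simp only [lppSteps] at hs h1 h2 ⊢; omega
  rw [pathWeight, pathWeight, hlen, sum_range_add, hs, ← sum_range_toNat_sub_add_one _ hkm]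
  congr 1
  refine sum_congr rfl fun i hi => ?_
  rw [hrow i (Nat.lt_succ_iff.1 (mem_range.1 hi))]

theorem IsUpRightPath.exists_append_row {q : ℕ → ℤ × ℤ} (hq : IsUpRightPath x (k, n) q)
    (hkm : k ≤ m) : ∃ p, IsUpRightPath x (m, n + 1) p ∧
      pathWeight Y x (m, n + 1) p = pathWeight Y x (k, n) q + ∑ i ∈ Icc k m, Y i (n + 1) := by
  set s := lppSteps x (k, n)
  let p : ℕ → ℤ × ℤ := fun i => if i ≤ s then q i else (k + (i - (s + 1) : ℕ), n + 1)
  obtain ⟨h1, h2⟩ := hq.le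
  have hlen : lppSteps x (m, n + 1) = s + 1 + (m - k).toNat := by
    simp only [s, lppSteps] at h1 h2 ⊢; omega
  have hrow : ∀ i, p (s + 1 + i) = (k + i, n + 1) := fun i => by
    simp [p, show ¬s + 1 + i ≤ s by omega]
  have hp : IsUpRightPath x (m, n + 1) p := by
    refine ⟨by simp [p, hq.1], by rw [hlen, hrow]; ext <;> simp; omega, fun i hi => ?_⟩
    rw [hlen] at hi
    rcases lt_trichotomy i s with his | rfl | his
    · simpa [p, his.le, Nat.succ_le_of_lt his] using hq.2.2 i his
    · right
      rw [show s + 1 = s + 1 + 0 from rfl, hrow, show p s = q s from if_pos le_rfl, hq.2.1]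
      simp
    · left
      obtain ⟨j, rfl⟩ := Nat.exists_eq_add_of_lt his
      rw [show s + j + 1 + 1 = s + 1 + (j + 1) by ring, show s + j + 1 = s + 1 + j by ring,
        hrow, hrow]
      ext <;> simp; ring
  refine ⟨p, hp, ?_⟩
  rw [pathWeight_eq_add_sum_row Y hq.le rfl hkm fun i _ => hrow i]
  congr 1
  refine sum_congr rfl fun i hi => ?_
  have : i ≤ s := Nat.lt_succ_iff.1 (mem_range.1 hi)
  simp [p, this]

theorem IsUpRightPath.exists_split_last_row (hp : IsUpRightPath x (m, n + 1) p)
    (hx : x.2 ≤ n) : ∃ k ≤ m, IsUpRightPath x (k, n) p ∧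
      pathWeight Y x (m, n + 1) p = pathWeight Y x (k, n) p + ∑ i ∈ Icc k m, Y i (n + 1) := by
  classical
  have hex : ∃ t, (p t).2 = n + 1 := ⟨_, by rw [hp.2.1]⟩
  have htop : (p (Nat.find hex)).2 = n + 1 := Nat.find_spec hex
  have hle : Nat.find hex ≤ lppSteps x (m, n + 1) := Nat.find_min' hex (by rw [hp.2.1])
  obtain ⟨s, hs⟩ : ∃ s, Nat.find hex = s + 1 :=
    Nat.exists_eq_succ_of_ne_zero fun h0 => by rw [h0, hp.1] at htop; omega
  rw [hs] at htop hle
  have hbelow : (p s).2 ≠ n + 1 := Nat.find_min hex (by omega)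
  have hvert : p (s + 1) = p s + (0, 1) :=
    (hp.2.2 s hle).resolve_left fun h => hbelow (by simpa [h] using htop)
  set k := (p (s + 1)).1
  have hps : p s = (k, n) := by
    ext
    · simp [k, hvert]
    · simp only [hvert, Prod.snd_add] at htop; omega
  have hkm : k ≤ m := (hp.mem_Icc hle).2.1
  have hsum := hp.fst_add_snd hle
  have hrow : ∀ i ≤ (m - k).toNat, p (s + 1 + i) = (k + i, n + 1) := by
    intro i hi
    have : s + 1 + i ≤ lppSteps x (m, n + 1) := by
      simp only [lppSteps] at hsum ⊢; rw [htop] at hsum; omega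
    simpa [htop] using hp.apply_of_snd_eq (Nat.le_add_right _ _) this htop
  have hs_le : s ≤ lppSteps x (m, n + 1) := by omega
  refine ⟨k, hkm, hps ▸ hp.restrict hs_le, pathWeight_eq_add_sum_row Y ?_ ?_ hkm hrow⟩
  · exact hps ▸ (hp.mem_Icc hs_le).1
  · exact hps ▸ hp.lppSteps_apply hs_le

end Rows

theorem isLUB_lpp_add_sum_row (Y : ℤ → ℤ → ℝ) {x : ℤ × ℤ} {m n : ℤ} (hxm : x.1 ≤ m)
    (hxn : x.2 ≤ n) :
    IsLUB {v | ∃ k, x.1 ≤ k ∧ k ≤ m ∧ v = lpp Y x (k, n) + ∑ i ∈ Icc k m, Y i (n + 1)}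
      (lpp Y x (m, n + 1)) := by
  constructor
  · rintro _ ⟨k, hxk, hkm, rfl⟩
    rw [← le_sub_iff_add_le]
    refine (isLUB_lpp Y (x := x) (y := (k, n)) ⟨hxk, hxn⟩).2 ?_
    rintro _ ⟨q, hq, rfl⟩
    obtain ⟨p, hp, hweight⟩ := hq.exists_append_row Y hkm
    rw [le_sub_iff_add_le, ← hweight]
    exact pathWeight_le_lpp Y hp
  · intro b hb
    refine (isLUB_lpp Y (x := x) (y := (m, n + 1)) ⟨hxm, by omega⟩).2 ?_
    rintro _ ⟨p, hp, rfl⟩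
    obtain ⟨k, hkm, hq, hweight⟩ := hp.exists_split_last_row Y hxn
    rw [hweight]
    exact (add_le_add (pathWeight_le_lpp Y hq) le_rfl).trans (hb ⟨k, hq.le.1, hkm, rfl⟩)

section BoundaryLPP

variable {Y : ℤ → ℤ → ℝ} {h : ℤ → ℝ}

theorem dh_zero (m : ℤ) : dh Y h m 0 = h m := if_pos rfl

theorem isLUB_dh {m n : ℤ} (hn : n ≠ 0)
    (hfin : BddAbove {v : ℝ | ∃ k : ℤ, k ≤ m ∧ v = h k + lpp Y (k, 1) (m, n)}) :
    IsLUB {v : ℝ | ∃ k : ℤ, k ≤ m ∧ v = h k + lpp Y (k, 1) (m, n)} (dh Y h m n) := by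
  rw [dh, if_neg hn]
  exact isLUB_csSup ⟨_, m, le_rfl, rfl⟩ hfin

theorem isLUB_dh_add_sum_row
    (hfin : ∀ m n : ℤ, 1 ≤ n →
      BddAbove {v : ℝ | ∃ k : ℤ, k ≤ m ∧ v = h k + lpp Y (k, 1) (m, n)})
    {n : ℤ} (hn : 0 ≤ n) (m : ℤ) :
    IsLUB {v | ∃ k, k ≤ m ∧ v = dh Y h k n + ∑ i ∈ Icc k m, Y i (n + 1)} (dh Y h m (n + 1)) := by
  have hdh := isLUB_dh (by omega) (hfin m (n + 1) (by omega))
  rcases hn.eq_or_lt with rfl | hn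
  · convert hdh using 1
    exact Set.ext fun v => exists_congr fun k => and_congr_right fun hkm => by
      rw [dh_zero, zero_add, lpp_row Y hkm]
  constructor
  · rintro _ ⟨k, hkm, rfl⟩
    suffices dh Y h k n ≤ dh Y h m (n + 1) - ∑ i ∈ Icc k m, Y i (n + 1) by linarith
    refine (isLUB_dh (by omega) (hfin k n hn)).2 ?_
    rintro _ ⟨j, hjk, rfl⟩
    have hlpp := (isLUB_lpp_add_sum_row Y (x := (j, 1)) (hjk.trans hkm) hn).1 ⟨k, hjk, hkm, rfl⟩
    have hdhm := hdh.1 ⟨j, hjk.trans hkm, rfl⟩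
    linarith
  · intro b hb
    refine hdh.2 ?_
    rintro _ ⟨j, hjm, rfl⟩
    suffices lpp Y (j, 1) (m, n + 1) ≤ b - h j by linarith
    refine (isLUB_lpp_add_sum_row Y hjm hn).2 ?_
    rintro _ ⟨k, hjk, hkm, rfl⟩
    have hdhk := (isLUB_dh (by omega) (hfin k n hn)).1 ⟨j, hjk, rfl⟩
    have hb := hb ⟨k, hkm, rfl⟩
    linarith

end BoundaryLPP

theorem Fcanon_add_one (I : ℤ → ℝ) (n : ℤ) : Fcanon I (n + 1) = Fcanon I n + I (n + 1) := by
  have hF : ∀ k, Fcanon I k = ∑ i ∈ Icc 1 k, I i - ∑ i ∈ Icc (k + 1) 0, I i := fun k => by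
    unfold Fcanon
    split_ifs with hk
    · rw [Icc_eq_empty_of_lt (show (0 : ℤ) < k + 1 by omega), sum_empty, sub_zero]
    · rw [Icc_eq_empty_of_lt (show k < 1 by omega), sum_empty, zero_sub]
  rcases le_or_gt 0 n with hn | hn
  · rw [hF, hF, ← insert_Icc_right_eq_Icc_add_one (by omega), sum_insert (by simp),
      Icc_eq_empty_of_lt (show (0 : ℤ) < n + 1 + 1 by omega),
      Icc_eq_empty_of_lt (show (0 : ℤ) < n + 1 by omega)]
    ring
  · rw [hF, hF, ← insert_Icc_add_one_left_eq_Icc (show n + 1 ≤ 0 by omega), sum_insert (by simp),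
      Icc_eq_empty_of_lt (show n + 1 < 1 by omega), Icc_eq_empty_of_lt (show n < 1 by omega)]
    ring

theorem Fcanon_eq_sub {I G : ℤ → ℝ} (hI : ∀ i, I i = G i - G (i - 1)) (k : ℤ) :
    Fcanon I k = G k - G 0 := by
  induction k using Int.induction_on with
  | zero => simp [Fcanon]
  | succ i ih => rw [Fcanon_add_one, ih, hI, add_sub_cancel_right]; ring
  | pred i ih =>
    have := Fcanon_add_one I (-i - 1)
    rw [sub_add_cancel, ih, hI] at this
    linarith

theorem isLUB_setOf_eq_sub {ι : Type*} {P : ι → Prop} {f g : ι → ℝ} {a c : ℝ}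
    (hg : ∀ k, g k = f k - c) (hf : IsLUB {v | ∃ k, P k ∧ v = f k} a) :
    IsLUB {v | ∃ k, P k ∧ v = g k} (a - c) := by
  have : {v | ∃ k, P k ∧ v = g k} = OrderIso.subRight c '' {v | ∃ k, P k ∧ v = f k} := by
    ext v
    simp [hg, eq_comm]
  rwa [this, show a - c = OrderIso.subRight c a from rfl, OrderIso.isLUB_image']

section Queue

variable {Y : ℤ → ℤ → ℝ} {h : ℤ → ℝ}

theorem isLUB_Ftil_Iseq
    (hfin : ∀ m n : ℤ, 1 ≤ n →
      BddAbove {v : ℝ | ∃ k : ℤ, k ≤ m ∧ v = h k + lpp Y (k, 1) (m, n)})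
    {n : ℕ} (hF : ∀ k, Fcanon (Iseq Y h n) k = dh Y h k n - dh Y h 0 n)
    (l : ℤ) :
    IsLUB {v | ∃ k, k ≤ l ∧ v = Fcanon (Iseq Y h n) k + ∑ i ∈ Icc k l, Y i ((n : ℤ) + 1)}
      (dh Y h l ((n : ℤ) + 1) - dh Y h 0 n) :=
  isLUB_setOf_eq_sub (fun k => by rw [hF]; ring) (isLUB_dh_add_sum_row hfin n.cast_nonneg l)

theorem Fcanon_Iseq
    (hfin : ∀ m n : ℤ, 1 ≤ n →
      BddAbove {v : ℝ | ∃ k : ℤ, k ≤ m ∧ v = h k + lpp Y (k, 1) (m, n)})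
    (n : ℕ) (k : ℤ) : Fcanon (Iseq Y h n) k = dh Y h k n - dh Y h 0 n := by
  induction n generalizing k with
  | zero => exact Fcanon_eq_sub (fun i => by simp [Iseq]) k
  | succ n ih =>
    rw [Nat.cast_succ]
    refine Fcanon_eq_sub (G := fun i => dh Y h i ((n : ℤ) + 1)) (fun i => ?_) k
    have hFtil l := (isLUB_Ftil_Iseq hfin ih l).csSup_eq ⟨_, l, le_rfl, rfl⟩
    simp only [Iseq, Dmap, Ftil, hFtil]
    ring

theorem Ftil_Iseq
    (hfin : ∀ m n : ℤ, 1 ≤ n →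
      BddAbove {v : ℝ | ∃ k : ℤ, k ≤ m ∧ v = h k + lpp Y (k, 1) (m, n)})
    (n : ℕ) (l : ℤ) :
    Ftil (fun i => Y i ((n : ℤ) + 1)) (Iseq Y h n) l = dh Y h l ((n : ℤ) + 1) - dh Y h 0 n :=
  (isLUB_Ftil_Iseq hfin (Fcanon_Iseq hfin n) l).csSup_eq ⟨_, l, le_rfl, rfl⟩

end Queue

theorem stmt13_general (Y : ℤ → ℤ → ℝ)
    (h : ℤ → ℝ)
    (hfin : ∀ m n : ℤ, 1 ≤ n →
      BddAbove {v : ℝ | ∃ k : ℤ, k ≤ m ∧ v = h k + lpp Y (k, 1) (m, n)}) :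
    (∀ n : ℕ, ∀ l : ℤ,
      BddAbove {v : ℝ | ∃ k : ℤ, k ≤ l ∧
        v = Fcanon (Iseq Y h n) k + ∑ i ∈ Finset.Icc k l, Y i ((n : ℤ) + 1)}) ∧
    (∀ n : ℕ, ∀ m : ℤ,
      Iseq Y h (n + 1) m = dh Y h m ((n : ℤ) + 1) - dh Y h (m - 1) ((n : ℤ) + 1) ∧
      Jseq Y h n m = dh Y h m ((n : ℤ) + 1) - dh Y h m (n : ℤ)) := by
  refine ⟨fun n l => (isLUB_Ftil_Iseq hfin (Fcanon_Iseq hfin n) l).bddAbove,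
    fun n m => ⟨?_, ?_⟩⟩
  · rw [Iseq, Dmap, Ftil_Iseq hfin, Ftil_Iseq hfin]
    ring
  · rw [Jseq, Smap, Ftil_Iseq hfin, Fcanon_Iseq hfin]
    ring

/-- The queueing construction of the half-plane LPP with boundary: the recursions for
`Iⁿ` and `Jⁿ` are well defined (all the suprema involved are bounded above), and for
all `n ≥ 1`, `m ∈ ℤ`: `Iⁿ_m = d^h(m,n) − d^h(m−1,n)` and `Jⁿ_m = d^h(m,n) − d^h(m,n−1)`. -/
theorem stmt13 (Y : ℤ → ℤ → ℝ) (hY : ∀ m n : ℤ, 1 ≤ n → 0 ≤ Y m n)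
    (h : ℤ → ℝ)
    (hfin : ∀ m n : ℤ, 1 ≤ n →
      BddAbove {v : ℝ | ∃ k : ℤ, k ≤ m ∧ v = h k + lpp Y (k, 1) (m, n)}) :
    (∀ n : ℕ, ∀ l : ℤ,
      BddAbove {v : ℝ | ∃ k : ℤ, k ≤ l ∧
        v = Fcanon (Iseq Y h n) k + ∑ i ∈ Finset.Icc k l, Y i ((n : ℤ) + 1)}) ∧
    (∀ n : ℕ, ∀ m : ℤ,
      Iseq Y h (n + 1) m = dh Y h m ((n : ℤ) + 1) - dh Y h (m - 1) ((n : ℤ) + 1) ∧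
      Jseq Y h n m = dh Y h m ((n : ℤ) + 1) - dh Y h m (n : ℤ)) :=
  stmt13_general Y h hfin
end

section
/- Let L : ℝ⁴↑ → ℝ satisfy the global parabolic bound with some constant C > 0, let t ∈ ℝ, and let W : ℝ → ℝ be continuous with |W(z)| ≤ a + b|z| for all z ∈ ℝ, for some constants a, b > 0. Then for every (x,s) ∈ ℝ² with s < t, L(x,s;z,t) + W(z) → −∞ as z → +∞ and as z → −∞, so the set of maximizers of z ↦ L(x,s;z,t) + W(z) over z ∈ ℝ is nonempty and compact; moreover, for every compact set K ⊆ {(x,s) ∈ ℝ² : s < t} there exists Z > 0 such that for every (x,s) ∈ K, every such maximizer lies in [−Z, Z]. -/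
open Filter

lemma logsq_le {v : ℝ} (hv : 1 ≤ v) : (Real.log v) ^ 2 ≤ 4 * v := by
  have hv0 : 0 < v := by linarith
  have h1 : Real.log v = 2 * Real.log (Real.sqrt v) := by
    rw [Real.log_sqrt hv0.le]; ring
  have h2 : Real.log (Real.sqrt v) ≤ Real.sqrt v - 1 :=
    Real.log_le_sub_one_of_pos (Real.sqrt_pos.mpr hv0)
  have h3 : 0 ≤ Real.log v := Real.log_nonneg hv
  have h4 : Real.sqrt v ^ 2 = v := Real.sq_sqrt hv0.le
  have h5 : 0 ≤ Real.sqrt v := Real.sqrt_nonneg v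
  nlinarith [sq_nonneg (Real.log v - 2 * Real.sqrt v)]

lemma sqrt_sum_le (x z s t : ℝ) :
    Real.sqrt (x ^ 2 + z ^ 2 + s ^ 2 + t ^ 2) ≤ |x| + |z| + |s| + |t| := by
  rw [show |x| + |z| + |s| + |t| = Real.sqrt ((|x| + |z| + |s| + |t|) ^ 2) from
    (Real.sqrt_sq (by positivity)).symm]
  apply Real.sqrt_le_sqrt
  nlinarith [abs_nonneg x, abs_nonneg z, abs_nonneg s, abs_nonneg t,
    sq_abs x, sq_abs z, sq_abs s, sq_abs t]

lemma Lbound {C : ℝ} {L : ℝ → ℝ → ℝ → ℝ → ℝ} (hL : GlobalParabolicBound C L) (hC : 0 ≤ C)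
    (x s z t : ℝ) (hst : s < t) :
    L x s z t ≤ -(x - z) ^ 2 / (t - s) +
      (C * (t - s) ^ ((1 : ℝ) / 3) / min (t - s) 1) * (4 * (2 * (|x| + |s| + |t|) + 4)) +
      (C * (t - s) ^ ((1 : ℝ) / 3) / min (t - s) 1) * 8 * |z| := by
  have hτ : 0 < t - s := by linarith
  have hm0 : 0 < min (t - s) 1 := lt_min hτ one_pos
  have hm1 : min (t - s) 1 ≤ 1 := min_le_right _ _
  have hsq := sqrt_sum_le x z s t
  have hs0 : 0 ≤ Real.sqrt (x ^ 2 + z ^ 2 + s ^ 2 + t ^ 2) := Real.sqrt_nonneg _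
  have hv1 : 1 ≤ (2 * Real.sqrt (x ^ 2 + z ^ 2 + s ^ 2 + t ^ 2) + 4) / min (t - s) 1 := by
    rw [le_div_iff₀ hm0]; nlinarith
  have hlog := logsq_le hv1
  have hpow : (0 : ℝ) ≤ (t - s) ^ ((1 : ℝ) / 3) := Real.rpow_nonneg hτ.le _
  have hb := hL x s z t hst
  have h1 : L x s z t + (x - z) ^ 2 / (t - s) ≤
      C * (t - s) ^ ((1 : ℝ) / 3) *
        (Real.log ((2 * Real.sqrt (x ^ 2 + z ^ 2 + s ^ 2 + t ^ 2) + 4) / min (t - s) 1)) ^ 2 :=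
    (le_abs_self _).trans hb
  have hCp : 0 ≤ C * (t - s) ^ ((1 : ℝ) / 3) := mul_nonneg hC hpow
  have h2 : C * (t - s) ^ ((1 : ℝ) / 3) *
      (Real.log ((2 * Real.sqrt (x ^ 2 + z ^ 2 + s ^ 2 + t ^ 2) + 4) / min (t - s) 1)) ^ 2 ≤
      C * (t - s) ^ ((1 : ℝ) / 3) *
        (4 * ((2 * Real.sqrt (x ^ 2 + z ^ 2 + s ^ 2 + t ^ 2) + 4) / min (t - s) 1)) :=
    mul_le_mul_of_nonneg_left hlog hCp
  have hD0 : 0 ≤ C * (t - s) ^ ((1 : ℝ) / 3) / min (t - s) 1 := div_nonneg hCp hm0.le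
  have h3 : C * (t - s) ^ ((1 : ℝ) / 3) *
      (4 * ((2 * Real.sqrt (x ^ 2 + z ^ 2 + s ^ 2 + t ^ 2) + 4) / min (t - s) 1)) =
      (C * (t - s) ^ ((1 : ℝ) / 3) / min (t - s) 1) *
        (4 * (2 * Real.sqrt (x ^ 2 + z ^ 2 + s ^ 2 + t ^ 2) + 4)) := by
    field_simp
  have h4 : (C * (t - s) ^ ((1 : ℝ) / 3) / min (t - s) 1) *
        (4 * (2 * Real.sqrt (x ^ 2 + z ^ 2 + s ^ 2 + t ^ 2) + 4)) ≤
      (C * (t - s) ^ ((1 : ℝ) / 3) / min (t - s) 1) * (4 * (2 * (|x| + |s| + |t|) + 4)) +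
      (C * (t - s) ^ ((1 : ℝ) / 3) / min (t - s) 1) * 8 * |z| := by
    nlinarith [hD0, hsq, abs_nonneg z]
  have h5 : L x s z t = L x s z t + (x - z) ^ 2 / (t - s) - (x - z) ^ 2 / (t - s) := by ring
  rw [h5, neg_div]
  linarith [h1, h2, h3.le, h4]

lemma quad_atTop (x τ A B : ℝ) (hτ : 0 < τ) :
    Tendsto (fun z : ℝ => -(x - z) ^ 2 / τ + A + B * |z|) atTop atBot := by
  have h1 : Tendsto (fun z : ℝ => -z + τ * A) atTop atBot :=
    tendsto_atBot_add_const_right _ _ tendsto_neg_atTop_atBot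
  have h2 : Tendsto (fun z : ℝ => -(x - z) ^ 2 + τ * A + τ * B * z) atTop atBot := by
    apply tendsto_atBot_mono' atTop _ h1
    filter_upwards [eventually_ge_atTop (2 * |x| + 2 * |τ * B| + 2)] with z hz
    have hx0 : 0 ≤ |x| := abs_nonneg x
    have hb0 : 0 ≤ |τ * B| := abs_nonneg _
    have hz0 : 0 < z := by linarith
    have ha1 : z - |x| ≤ |x - z| := by
      have := abs_sub_abs_le_abs_sub z x
      rw [abs_of_pos hz0] at this
      rw [abs_sub_comm]; linarith
    have h5 : z / 2 ≤ z - |x| := by linarith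
    have h6 : 2 * |τ * B| + 2 ≤ z - |x| := by linarith
    have h7 : (z / 2) * (2 * |τ * B| + 2) ≤ (z - |x|) * (z - |x|) :=
      mul_le_mul h5 h6 (by linarith) (by linarith)
    have h8 : (z - |x|) * (z - |x|) ≤ |x - z| * |x - z| :=
      mul_le_mul ha1 ha1 (by linarith) (abs_nonneg _)
    have h9 : |x - z| * |x - z| = (x - z) ^ 2 := by
      rw [← sq_abs]; ring
    have h10 : τ * B ≤ |τ * B| := le_abs_self _
    nlinarith
  have h3 : Tendsto (fun z : ℝ => (-(x - z) ^ 2 + τ * A + τ * B * z) / τ) atTop atBot :=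
    h2.atBot_div_const hτ
  apply Tendsto.congr' _ h3
  filter_upwards [eventually_ge_atTop (0 : ℝ)] with z hz
  rw [abs_of_nonneg hz]
  field_simp

lemma quad_atBot (x τ A B : ℝ) (hτ : 0 < τ) :
    Tendsto (fun z : ℝ => -(x - z) ^ 2 / τ + A + B * |z|) atBot atBot := by
  have h := (quad_atTop (-x) τ A B hτ).comp tendsto_neg_atBot_atTop
  have he : (fun z : ℝ => -(x - z) ^ 2 / τ + A + B * |z|) =
      (fun z : ℝ => -(-x - z) ^ 2 / τ + A + B * |z|) ∘ Neg.neg := by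
    funext z
    simp only [Function.comp_apply, abs_neg]
    ring_nf
  rw [he]
  exact h

set_option maxHeartbeats 2000000 in
/-- Existence and local boundedness of maximizers: if `L` is continuous with the
global parabolic bound and `W` is continuous with at-most-linear growth, then for
each `(x,s)` with `s < t`, `L(x,s;z,t) + W(z) → −∞` as `z → ±∞`, the set of
maximizers over `z` is nonempty and compact, and maximizers are bounded uniformly
over `(x,s)` in any compact subset of `{(x,s) : s < t}`. -/
theorem stmt16 (C : ℝ) (hC : 0 < C) (L : ℝ → ℝ → ℝ → ℝ → ℝ)
    (hLcont : ContinuousOn (fun p : ℝ × ℝ × ℝ × ℝ => L p.1 p.2.1 p.2.2.1 p.2.2.2)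
      {p : ℝ × ℝ × ℝ × ℝ | p.2.1 < p.2.2.2})
    (hL : GlobalParabolicBound C L)
    (t : ℝ) (W : ℝ → ℝ) (hW : Continuous W)
    (a b : ℝ) (ha : 0 < a) (hb : 0 < b)
    (hgrowth : ∀ z : ℝ, |W z| ≤ a + b * |z|) :
    (∀ x s : ℝ, s < t →
      Tendsto (fun z => L x s z t + W z) atTop atBot ∧
      Tendsto (fun z => L x s z t + W z) atBot atBot ∧
      {z : ℝ | ∀ w : ℝ, L x s w t + W w ≤ L x s z t + W z}.Nonempty ∧
      IsCompact {z : ℝ | ∀ w : ℝ, L x s w t + W w ≤ L x s z t + W z}) ∧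
    (∀ K : Set (ℝ × ℝ), IsCompact K → K ⊆ {p : ℝ × ℝ | p.2 < t} →
      ∃ Z : ℝ, 0 < Z ∧ ∀ p ∈ K, ∀ z : ℝ,
        (∀ w : ℝ, L p.1 p.2 w t + W w ≤ L p.1 p.2 z t + W z) → |z| ≤ Z) := by
  have hopen : IsOpen {p : ℝ × ℝ × ℝ × ℝ | p.2.1 < p.2.2.2} :=
    isOpen_lt (by fun_prop) (by fun_prop)
  constructor
  · intro x s hst
    have hτ : 0 < t - s := by linarith
    set D := C * (t - s) ^ ((1 : ℝ) / 3) / min (t - s) 1 with hDdef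
    have hm0 : 0 < min (t - s) 1 := lt_min hτ one_pos
    have hD0 : 0 ≤ D :=
      div_nonneg (mul_nonneg hC.le (Real.rpow_nonneg hτ.le _)) hm0.le
    have hub : ∀ z, L x s z t + W z ≤
        -(x - z) ^ 2 / (t - s) + (D * (4 * (2 * (|x| + |s| + |t|) + 4)) + a) +
          (D * 8 + b) * |z| := by
      intro z
      have h1 := Lbound hL hC.le x s z t hst
      have h2 : W z ≤ a + b * |z| := le_of_abs_le (hgrowth z)
      rw [← hDdef] at h1
      nlinarith [abs_nonneg z]
    have hcontz : Continuous (fun z : ℝ => L x s z t + W z) := by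
      have he : Continuous (fun z : ℝ => ((x, s, z, t) : ℝ × ℝ × ℝ × ℝ)) := by fun_prop
      have hc1 : Continuous (fun z : ℝ => L x s z t) := by
        rw [continuous_iff_continuousAt]
        intro z
        have hmem : ((x, s, z, t) : ℝ × ℝ × ℝ × ℝ) ∈ {p : ℝ × ℝ × ℝ × ℝ | p.2.1 < p.2.2.2} := hst
        exact ContinuousAt.comp (f := fun z : ℝ => ((x, s, z, t) : ℝ × ℝ × ℝ × ℝ))
          (hLcont.continuousAt (hopen.mem_nhds hmem)) he.continuousAt
      exact hc1.add hW
    have hTop : Tendsto (fun z => L x s z t + W z) atTop atBot :=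
      tendsto_atBot_mono hub (quad_atTop x _ _ _ hτ)
    have hBot : Tendsto (fun z => L x s z t + W z) atBot atBot :=
      tendsto_atBot_mono hub (quad_atBot x _ _ _ hτ)
    have hco : Tendsto (fun z => L x s z t + W z) (cocompact ℝ) atBot := by
      rw [cocompact_eq_atBot_atTop, tendsto_sup]
      exact ⟨hBot, hTop⟩
    obtain ⟨z₀, hz₀⟩ := hcontz.exists_forall_ge hco
    refine ⟨hTop, hBot, ⟨z₀, hz₀⟩, ?_⟩
    set S := {z : ℝ | ∀ w : ℝ, L x s w t + W w ≤ L x s z t + W z} with hS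
    have hclosed : IsClosed S := by
      have : S = ⋂ w : ℝ, {z : ℝ | L x s w t + W w ≤ L x s z t + W z} := by
        ext z; simp [hS, Set.mem_iInter]
      rw [this]
      exact isClosed_iInter fun w => isClosed_le continuous_const hcontz
    obtain ⟨Zp, hZp⟩ := (eventually_atTop).mp
      (hTop.eventually (eventually_le_atBot (L x s z₀ t + W z₀ - 1)))
    obtain ⟨Zm, hZm⟩ := (eventually_atBot).mp
      (hBot.eventually (eventually_le_atBot (L x s z₀ t + W z₀ - 1)))
    have hsub : S ⊆ Set.Icc Zm Zp := by
      intro z hz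
      have hge : L x s z₀ t + W z₀ ≤ L x s z t + W z := hz z₀
      constructor
      · by_contra hlt
        push_neg at hlt
        have := hZm z hlt.le
        linarith
      · by_contra hlt
        push_neg at hlt
        have := hZp z hlt.le
        linarith
    exact isCompact_Icc.of_isClosed_subset hclosed hsub
  · intro K hK hKsub
    rcases K.eq_empty_or_nonempty with rfl | hne
    · exact ⟨1, one_pos, by simp⟩
    obtain ⟨R, hR⟩ := isBounded_iff_forall_norm_le.mp hK.isBounded
    obtain ⟨p₀, hp₀⟩ := hne
    have hR0 : 0 ≤ R := (norm_nonneg p₀).trans (hR p₀ hp₀)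
    have hxR : ∀ p ∈ K, |p.1| ≤ R ∧ |p.2| ≤ R := by
      intro p hp
      constructor
      · exact (Real.norm_eq_abs p.1 ▸ (norm_fst_le p)).trans (hR p hp)
      · exact (Real.norm_eq_abs p.2 ▸ (norm_snd_le p)).trans (hR p hp)
    obtain ⟨q, hqK, hq⟩ := hK.exists_isMinOn ⟨p₀, hp₀⟩
      ((continuous_const.sub continuous_snd).continuousOn (s := K))
    have hτq : 0 < t - q.2 := sub_pos.mpr (hKsub hqK)
    have hτlo : ∀ p ∈ K, t - q.2 ≤ t - p.2 := fun p hp => hq hp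
    set τ₁ := t + R with hτ₁def
    have hτ₁p : 0 < τ₁ := by
      have := (hxR q hqK).2
      have := neg_abs_le q.2
      simp only [hτ₁def]; linarith
    have hτhi : ∀ p ∈ K, t - p.2 ≤ τ₁ := by
      intro p hp
      have := (hxR p hp).2
      have := neg_abs_le p.2
      simp only [hτ₁def]; linarith
    set m₀ := min (t - q.2) 1 with hm₀def
    have hm₀ : 0 < m₀ := lt_min hτq one_pos
    -- lower bound for F p = L p.1 p.2 p.1 t + W p.1 on K
    have hFcont : ContinuousOn (fun p : ℝ × ℝ => L p.1 p.2 p.1 t + W p.1) K := by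
      have he : Continuous (fun p : ℝ × ℝ => ((p.1, p.2, p.1, t) : ℝ × ℝ × ℝ × ℝ)) := by
        fun_prop
      have hmaps : Set.MapsTo (fun p : ℝ × ℝ => ((p.1, p.2, p.1, t) : ℝ × ℝ × ℝ × ℝ)) K
          {p : ℝ × ℝ × ℝ × ℝ | p.2.1 < p.2.2.2} := fun p hp => hKsub hp
      exact (hLcont.comp he.continuousOn hmaps).add (hW.comp continuous_fst).continuousOn
    obtain ⟨q₁, hq₁K, hq₁⟩ := hK.exists_isMinOn ⟨p₀, hp₀⟩ hFcont
    set m₁ := L q₁.1 q₁.2 q₁.1 t + W q₁.1 with hm₁def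
    set D := C * τ₁ ^ ((1 : ℝ) / 3) / m₀ with hDdef
    have hD0 : 0 ≤ D := div_nonneg (mul_nonneg hC.le (Real.rpow_nonneg hτ₁p.le _)) hm₀.le
    set A := D * (4 * (2 * (2 * R + |t|) + 4)) + a with hAdef
    set B := D * 8 + b with hBdef
    have hB0 : 0 < B := by simp only [hBdef]; nlinarith
    have key : ∀ p ∈ K, ∀ z : ℝ,
        (∀ w : ℝ, L p.1 p.2 w t + W w ≤ L p.1 p.2 z t + W z) →
        (p.1 - z) ^ 2 ≤ τ₁ * (A + B * |z| - m₁) := by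
      intro p hp z hz
      have hst : p.2 < t := hKsub hp
      have hτp : 0 < t - p.2 := sub_pos.mpr hst
      have h1 : m₁ ≤ L p.1 p.2 p.1 t + W p.1 := hq₁ hp
      have h2 : L p.1 p.2 p.1 t + W p.1 ≤ L p.1 p.2 z t + W z := hz p.1
      have h3 := Lbound hL hC.le p.1 p.2 z t hst
      have h4 : W z ≤ a + b * |z| := le_of_abs_le (hgrowth z)
      have hτle : t - p.2 ≤ τ₁ := hτhi p hp
      have hpow : (t - p.2) ^ ((1 : ℝ) / 3) ≤ τ₁ ^ ((1 : ℝ) / 3) :=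
        Real.rpow_le_rpow hτp.le hτle (by norm_num)
      have hmge : m₀ ≤ min (t - p.2) 1 := min_le_min (hτlo p hp) le_rfl
      have hmp : 0 < min (t - p.2) 1 := lt_min hτp one_pos
      have hDp : C * (t - p.2) ^ ((1 : ℝ) / 3) / min (t - p.2) 1 ≤ D := by
        rw [hDdef]
        exact div_le_div₀ (mul_nonneg hC.le (Real.rpow_nonneg hτ₁p.le _))
          (mul_le_mul_of_nonneg_left hpow hC.le) hm₀ hmge
      have hDp0 : 0 ≤ C * (t - p.2) ^ ((1 : ℝ) / 3) / min (t - p.2) 1 :=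
        div_nonneg (mul_nonneg hC.le (Real.rpow_nonneg hτp.le _)) hmp.le
      have hdiv : -(p.1 - z) ^ 2 / (t - p.2) ≤ -(p.1 - z) ^ 2 / τ₁ := by
        rw [neg_div, neg_div, neg_le_neg_iff]
        exact div_le_div_of_nonneg_left (sq_nonneg _) hτp hτle
      have hx2R : |p.1| + |p.2| ≤ 2 * R := by
        have := hxR p hp; linarith [this.1, this.2]
      have e1 : (C * (t - p.2) ^ ((1 : ℝ) / 3) / min (t - p.2) 1) *
            (4 * (2 * (|p.1| + |p.2| + |t|) + 4)) ≤ D * (4 * (2 * (2 * R + |t|) + 4)) :=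
        mul_le_mul hDp (by linarith) (by positivity) hD0
      have e2 : (C * (t - p.2) ^ ((1 : ℝ) / 3) / min (t - p.2) 1) * 8 * |z| ≤ D * 8 * |z| := by
        have : (C * (t - p.2) ^ ((1 : ℝ) / 3) / min (t - p.2) 1) * 8 ≤ D * 8 := by linarith
        exact mul_le_mul_of_nonneg_right this (abs_nonneg z)
      have hsum : m₁ ≤ -(p.1 - z) ^ 2 / τ₁ + A + B * |z| := by
        simp only [hAdef, hBdef]
        nlinarith [abs_nonneg z]
      have : (p.1 - z) ^ 2 / τ₁ ≤ A + B * |z| - m₁ := by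
        have hneg : -(p.1 - z) ^ 2 / τ₁ = -((p.1 - z) ^ 2 / τ₁) := by rw [neg_div]
        rw [hneg] at hsum
        linarith
      calc (p.1 - z) ^ 2 = (p.1 - z) ^ 2 / τ₁ * τ₁ := by field_simp
        _ ≤ (A + B * |z| - m₁) * τ₁ := mul_le_mul_of_nonneg_right this hτ₁p.le
        _ = τ₁ * (A + B * |z| - m₁) := by ring
    set E := τ₁ * (|A| + B + |m₁| + 1) with hEdef
    have hE0 : 0 < E := by
      simp only [hEdef]
      have : 0 < |A| + B + |m₁| + 1 := by positivity
      positivity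
    refine ⟨max (2 * R + 1) (4 * E), lt_of_lt_of_le (by linarith) (le_max_left _ _), ?_⟩
    intro p hp z hz
    have hq2 := key p hp z hz
    by_cases hcase : |z| ≤ 2 * R + 1
    · exact hcase.trans (le_max_left _ _)
    · push_neg at hcase
      have hzR : R ≤ |z| := by linarith
      have h5 : |z| - R ≤ |p.1 - z| := by
        have h := abs_sub_abs_le_abs_sub z p.1
        rw [abs_sub_comm z p.1] at h
        have := (hxR p hp).1
        linarith
      have h6 : (|z| - R) ^ 2 ≤ (p.1 - z) ^ 2 := by
        rw [← sq_abs (p.1 - z)]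
        exact pow_le_pow_left₀ (by linarith) h5 2
      have h7 : τ₁ * (A + B * |z| - m₁) ≤ E * (1 + |z|) := by
        simp only [hEdef]
        nlinarith [le_abs_self A, neg_abs_le m₁, abs_nonneg z, abs_nonneg A, abs_nonneg m₁,
          mul_nonneg hτ₁p.le (abs_nonneg z), hτ₁p.le, hB0.le]
      have h8 : ((|z| + 1) / 2) ^ 2 ≤ (|z| - R) ^ 2 := by
        apply pow_le_pow_left₀ (by positivity)
        linarith
      have h9 : (|z| + 1) ^ 2 ≤ 4 * E * (1 + |z|) := by nlinarith
      have h10 : |z| + 1 ≤ 4 * E := by nlinarith [abs_nonneg z]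
      have : |z| ≤ 4 * E := by linarith
      exact this.trans (le_max_right _ _)
end
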